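/- arXiv:2309.12372 — 14 statements merged into one kernel-verified Lean document; each statement's English description precedes it below -/
import Mathlib

section
/- If M and M' are nontrivial isomorphic Puiseux monoids, then there exists a positive rational q such that M' = qM. -/
/-- `a` is an atom of the Puiseux monoid `M`. -/
def IsAtomIn (M : AddSubmonoid ℚ) (a : ℚ) : Prop :=
  a ∈ M ∧ a ≠ 0 ∧ ∀ x ∈ M, ∀ y ∈ M, a = x + y → x = 0 ∨ y = 0

/-- `b` is atomic in `M`: it is `0` or a sum of atoms of `M`. -/
def AtomicIn (M : AddSubmonoid ℚ) (b : ℚ) : Prop :=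
  b ∈ AddSubmonoid.closure {a | IsAtomIn M a}

/-- `x` divides `y` in `M`. -/
def DvdIn (M : AddSubmonoid ℚ) (x y : ℚ) : Prop := y - x ∈ M

def QuasiFurstenberg (M : AddSubmonoid ℚ) : Prop :=
  ∀ b ∈ M, b ≠ 0 → ∃ c ∈ M, ∃ a, IsAtomIn M a ∧ DvdIn M a (b + c) ∧ ¬ DvdIn M a c

def QuasiAtomic (M : AddSubmonoid ℚ) : Prop :=
  ∀ b ∈ M, ∃ c ∈ M, AtomicIn M (b + c)

def AlmostFurstenberg (M : AddSubmonoid ℚ) : Prop :=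
  ∀ b ∈ M, b ≠ 0 →
    ∃ c, AtomicIn M c ∧ ∃ a, IsAtomIn M a ∧ DvdIn M a (b + c) ∧ ¬ DvdIn M a c

def NearlyFurstenberg (M : AddSubmonoid ℚ) : Prop :=
  ∃ c ∈ M, ∀ b ∈ M, b ≠ 0 → ∃ a, IsAtomIn M a ∧ DvdIn M a (b + c) ∧ ¬ DvdIn M a c

def Furstenberg (M : AddSubmonoid ℚ) : Prop :=
  ∀ b ∈ M, b ≠ 0 → ∃ a, IsAtomIn M a ∧ DvdIn M a b

def Antimatter (M : AddSubmonoid ℚ) : Prop := ∀ a, ¬ IsAtomIn M a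

def AtomicMonoid (M : AddSubmonoid ℚ) : Prop := ∀ b ∈ M, AtomicIn M b

def NearlyAtomic (M : AddSubmonoid ℚ) : Prop :=
  ∃ c ∈ M, ∀ b ∈ M, b ≠ 0 → AtomicIn M (b + c)

def AlmostAtomic (M : AddSubmonoid ℚ) : Prop :=
  ∀ b ∈ M, ∃ c, AtomicIn M c ∧ AtomicIn M (b + c)

/-
Any two nonnegative rationals `x` and `y ≠ 0` are commensurable: `n x = m y` for some naturals
`n ≠ 0` and `m`. An additive map `f` out of a Puiseux monoid therefore satisfies `n f(x) = m f(y)`,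
i.e. `f(x) y = x f(y)`, so `f` is multiplication by the constant `f(y)/y`. For an isomorphism onto
another Puiseux monoid that constant is positive, and `M' = f(M) = qM`.
-/

theorem Rat.exists_nat_mul_eq_nat_mul {x y : ℚ} (hx : 0 ≤ x) (hy : 0 < y) :
    ∃ n m : ℕ, n ≠ 0 ∧ (n : ℚ) * x = m * y := by
  set r := x / y with hr
  refine ⟨r.den, r.num.natAbs, r.den_ne_zero, ?_⟩
  rw [Nat.cast_natAbs, abs_of_nonneg (Rat.num_nonneg.mpr (div_nonneg hx hy.le)),
    ← Rat.mul_den_eq_num, hr]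
  field_simp

namespace AddSubmonoid

variable {M : AddSubmonoid ℚ}

theorem map_mul_eq_mul_map (hM : ∀ x ∈ M, 0 ≤ x) (f : M →+ ℚ) (x y : M) :
    f x * y = x * f y := by
  rcases (hM y y.2).eq_or_lt with hy | hy
  · have : y = 0 := Subtype.ext hy.symm
    simp [this]
  obtain ⟨n, m, hn, hnm⟩ := Rat.exists_nat_mul_eq_nat_mul (hM x x.2) hy
  have hf : (n : ℚ) * f x = m * f y := by
    have : n • x = m • y := Subtype.ext (by simpa [nsmul_eq_mul] using hnm)
    simpa [nsmul_eq_mul] using congrArg f this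
  apply mul_left_cancel₀ (Nat.cast_ne_zero.mpr hn)
  linear_combination (y : ℚ) * hf - f y * hnm

theorem map_eq_div_mul (hM : ∀ x ∈ M, 0 ≤ x) (f : M →+ ℚ) {y : M} (hy : (y : ℚ) ≠ 0)
    (x : M) : f x = f y / y * x := by
  rw [div_mul_eq_mul_div, eq_div_iff hy, map_mul_eq_mul_map hM, mul_comm]

end AddSubmonoid

theorem stmt_0_general (M M' : AddSubmonoid ℚ)
    (hM : ∀ x ∈ M, 0 ≤ x) (hM' : ∀ x ∈ M', 0 ≤ x)
    (hnt : ∃ x ∈ M, x ≠ 0)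
    (hiso : Nonempty (M ≃+ M')) :
    ∃ q : ℚ, 0 < q ∧ (M' : Set ℚ) = (fun x => q * x) '' (M : Set ℚ) := by
  obtain ⟨φ⟩ := hiso
  obtain ⟨x₀, hx₀M, hx₀⟩ := hnt
  set y : M := ⟨x₀, hx₀M⟩
  let f : M →+ ℚ := M'.subtype.comp φ.toAddMonoidHom
  have hfy : f y ≠ 0 := by
    simpa [f, y] using φ.map_ne_zero_iff.mpr (Subtype.coe_ne_coe.mp hx₀ : y ≠ 0)
  refine ⟨f y / x₀, div_pos ((hM' _ (φ y).2).lt_of_ne' hfy) ((hM _ hx₀M).lt_of_ne' hx₀), ?_⟩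
  have hf : ∀ x : M, (φ x : ℚ) = f y / x₀ * x := AddSubmonoid.map_eq_div_mul hM f hx₀
  ext z
  constructor
  · intro hz
    exact ⟨φ.symm ⟨z, hz⟩, (φ.symm ⟨z, hz⟩).2, by simpa using (hf (φ.symm ⟨z, hz⟩)).symm⟩
  · rintro ⟨x, hx, rfl⟩
    simp [← hf ⟨x, hx⟩]

/-- If `M` and `M'` are nontrivial isomorphic Puiseux monoids, then `M' = qM`
for some positive rational `q`. -/
theorem stmt_0 (M M' : AddSubmonoid ℚ)
    (hM : ∀ x ∈ M, 0 ≤ x) (hM' : ∀ x ∈ M', 0 ≤ x)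
    (hnt : ∃ x ∈ M, x ≠ 0) (hnt' : ∃ x ∈ M', x ≠ 0)
    (hiso : Nonempty (M ≃+ M')) :
    ∃ q : ℚ, 0 < q ∧ (M' : Set ℚ) = (fun x => q * x) '' (M : Set ℚ) :=
  stmt_0_general M M' hM hM' hnt hiso
end

section
/- Let M and M' be isomorphic Puiseux monoids, and let P and P' be the prime supports of M\{0} and M'\{0} respectively. Then the symmetric difference P Δ P' is finite. -/
/-- The prime support of the set of nonzero elements of `M`. -/
def PrimeSupport (M : AddSubmonoid ℚ) : Set ℕ :=
  {p | p.Prime ∧ ∃ q ∈ M, q ≠ 0 ∧ p ∣ q.den}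

/-!
An isomorphism of Puiseux monoids is multiplication by a nonzero rational `r`: any two
elements `x, q` of a Puiseux monoid are commensurable (`a • q = b • x` with `a ≠ 0`), so every
additive map `f` satisfies `f x * q = f q * x`. Multiplying by `r` changes the denominators
of nonzero elements only at the primes dividing the denominators of `r` and `r⁻¹`, so the
two prime supports differ by finitely many primes.
-/

theorem Rat.exists_nsmul_eq_nsmul {x q : ℚ} (hx : 0 < x) (hq : 0 ≤ q) :
    ∃ a b : ℕ, a ≠ 0 ∧ a • q = b • x := by
  have hnum : 0 ≤ (q / x).num := Rat.num_nonneg.2 (div_nonneg hq hx.le)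
  refine ⟨(q / x).den, (q / x).num.toNat, (q / x).den_nz, ?_⟩
  have hcast : (((q / x).num.toNat : ℕ) : ℚ) = (q / x).num := by
    exact_mod_cast Int.toNat_of_nonneg hnum
  rw [nsmul_eq_mul, nsmul_eq_mul, hcast, ← Rat.mul_den_eq_num]
  field_simp

section PuiseuxMonoid

variable {M : AddSubmonoid ℚ}

theorem AddSubmonoid.map_mul_comm_of_nonneg (hM : ∀ x ∈ M, 0 ≤ x) (f : M →+ ℚ) (x q : M) :
    f x * q = f q * x := by
  rcases eq_or_lt_of_le (hM x x.2) with hx | hx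
  · have : x = 0 := Subtype.ext hx.symm
    simp [this]
  obtain ⟨a, b, ha, hab⟩ := Rat.exists_nsmul_eq_nsmul hx (hM q q.2)
  have hsmul : a • q = b • x := Subtype.ext (by simpa using hab)
  have hf : (a : ℚ) * f q = b * f x := by
    simpa [nsmul_eq_mul] using congrArg f hsmul
  have hab' : (a : ℚ) * q = b * x := by simpa [nsmul_eq_mul] using hab
  apply mul_left_cancel₀ (Nat.cast_ne_zero.2 ha)
  linear_combination f x * hab' - x * hf

theorem AddSubmonoid.exists_ne_zero_forall_eq_mul (hM : ∀ x ∈ M, 0 ≤ x) (f : M →+ ℚ)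
    (hf : Function.Injective f) : ∃ r ≠ 0, ∀ q : M, f q = r * q := by
  by_cases hzero : ∀ x : M, (x : ℚ) = 0
  · refine ⟨1, one_ne_zero, fun q => ?_⟩
    have hq : q = 0 := Subtype.ext (hzero q)
    simp [hq]
  push Not at hzero
  obtain ⟨x, hx⟩ := hzero
  have hfx : f x ≠ 0 := (map_ne_zero_iff f hf).2 fun h => hx (by simp [h])
  refine ⟨f x / x, div_ne_zero hfx hx, fun q => ?_⟩
  rw [div_mul_eq_mul_div, map_mul_comm_of_nonneg hM f x q]
  field_simp

end PuiseuxMonoid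

theorem primeSupport_diff_finite {M M' : AddSubmonoid ℚ} {r : ℚ} (hr : r ≠ 0)
    (hmul : ∀ q ∈ M, r * q ∈ M') : (PrimeSupport M \ PrimeSupport M').Finite := by
  refine (r⁻¹.den.primeFactors.finite_toSet).subset ?_
  rintro p ⟨⟨hp, q, hqM, hq0, hpq⟩, hnot⟩
  have hpr : ¬ p ∣ (r * q).den := fun h => hnot ⟨hp, r * q, hmul q hqM, mul_ne_zero hr hq0, h⟩
  have hden : q.den ∣ r⁻¹.den * (r * q).den := by
    simpa [← mul_assoc, inv_mul_cancel₀ hr] using Rat.mul_den_dvd r⁻¹ (r * q)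
  refine Nat.mem_primeFactors.2 ⟨hp, ?_, r⁻¹.den_nz⟩
  exact (hp.dvd_mul.1 (hpq.trans hden)).resolve_right hpr

theorem stmt_1_general (M M' : AddSubmonoid ℚ)
    (hM : ∀ x ∈ M, 0 ≤ x)
    (hiso : Nonempty (M ≃+ M')) :
    ((PrimeSupport M \ PrimeSupport M') ∪ (PrimeSupport M' \ PrimeSupport M)).Finite := by
  obtain ⟨φ⟩ := hiso
  obtain ⟨r, hr, hφ⟩ : ∃ r ≠ 0, ∀ q : M, (φ q : ℚ) = r * q :=
    AddSubmonoid.exists_ne_zero_forall_eq_mul hM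
      (M'.subtype.comp φ.toAddMonoidHom) (Subtype.val_injective.comp φ.injective)
  refine (primeSupport_diff_finite hr fun q hq => ?_).union
    (primeSupport_diff_finite (inv_ne_zero hr) fun q hq => ?_)
  · exact hφ ⟨q, hq⟩ ▸ (φ ⟨q, hq⟩).2
  · have h := hφ (φ.symm ⟨q, hq⟩)
    rw [AddEquiv.apply_symm_apply] at h
    rw [show q = r * φ.symm ⟨q, hq⟩ from h, inv_mul_cancel_left₀ hr]
    exact (φ.symm ⟨q, hq⟩).2

/-- Isomorphic Puiseux monoids have prime supports with finite symmetric
difference. -/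
theorem stmt_1 (M M' : AddSubmonoid ℚ)
    (hM : ∀ x ∈ M, 0 ≤ x) (hM' : ∀ x ∈ M', 0 ≤ x)
    (hiso : Nonempty (M ≃+ M')) :
    ((PrimeSupport M \ PrimeSupport M') ∪ (PrimeSupport M' \ PrimeSupport M)).Finite :=
  stmt_1_general M M' hM hiso
end

section
/- Let M and M' be isomorphic Puiseux monoids and let p be a prime. Then the infimum of the p-adic valuations of nonzero elements of M is -∞ if and only if the infimum of the p-adic valuations of nonzero elements of M' is -∞. -/
lemma aux_hom_mul (M M' : AddSubmonoid ℚ) (hM : ∀ x ∈ M, 0 ≤ x)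
    (f : M →+ M') (x₀ : ℚ) (hx₀ : x₀ ∈ M) (hx₀0 : x₀ ≠ 0)
    (x : ℚ) (hx : x ∈ M) (hx0 : x ≠ 0) :
    (f ⟨x, hx⟩ : ℚ) = (x / x₀) * (f ⟨x₀, hx₀⟩ : ℚ) := by
  set r := x / x₀ with hr_def
  have hx₀pos : 0 < x₀ := lt_of_le_of_ne (hM x₀ hx₀) (Ne.symm hx₀0)
  have hxpos : 0 < x := lt_of_le_of_ne (hM x hx) (Ne.symm hx0)
  have hr : 0 < r := div_pos hxpos hx₀pos
  have hnum : 0 < r.num := Rat.num_pos.2 hr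
  have hden : (r.den : ℚ) ≠ 0 := by
    exact_mod_cast (Nat.pos_of_ne_zero r.den_nz).ne'
  have hdr : (r.den : ℚ) * r = (r.num : ℚ) := by
    rw [mul_comm]; exact_mod_cast Rat.mul_den_eq_num r
  have key : (r.den : ℚ) * x = ((r.num.toNat : ℕ) : ℚ) * x₀ := by
    have hx_eq : x = r * x₀ := by
      rw [hr_def, div_mul_cancel₀ x hx₀0]
    rw [hx_eq, ← mul_assoc, hdr]
    congr 1
    exact_mod_cast (Int.toNat_of_nonneg hnum.le).symm
  have hsub : r.den • (⟨x, hx⟩ : M) = r.num.toNat • (⟨x₀, hx₀⟩ : M) := by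
    apply Subtype.ext
    push_cast [nsmul_eq_mul]
    simpa [nsmul_eq_mul] using key
  have hf : (r.den : ℚ) * (f ⟨x, hx⟩ : ℚ) = (r.num.toNat : ℚ) * (f ⟨x₀, hx₀⟩ : ℚ) := by
    have := congrArg f hsub
    rw [map_nsmul, map_nsmul] at this
    have := congrArg Subtype.val this
    simpa [nsmul_eq_mul] using this
  have hnum' : ((r.num.toNat : ℕ) : ℚ) = (r.num : ℚ) := by
    exact_mod_cast Int.toNat_of_nonneg hnum.le
  have : (f ⟨x, hx⟩ : ℚ) = ((r.num : ℚ) / r.den) * (f ⟨x₀, hx₀⟩ : ℚ) := by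
    rw [div_mul_eq_mul_div, eq_div_iff hden]
    rw [hnum'] at hf
    linarith [hf]
  rw [this, Rat.num_div_den r]

lemma aux_dir (M M' : AddSubmonoid ℚ) (hM : ∀ x ∈ M, 0 ≤ x)
    (p : ℕ) (hp : p.Prime) (f : M ≃+ M')
    (h : ∀ n : ℤ, ∃ q ∈ M, q ≠ 0 ∧ padicValRat p q < n) :
    ∀ n : ℤ, ∃ q ∈ M', q ≠ 0 ∧ padicValRat p q < n := by
  haveI : Fact p.Prime := ⟨hp⟩
  obtain ⟨x₀, hx₀, hx₀0, -⟩ := h 0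
  set y₀ : ℚ := (f ⟨x₀, hx₀⟩ : ℚ) with hy₀
  have hy₀0 : y₀ ≠ 0 := by
    intro h0
    have : f ⟨x₀, hx₀⟩ = f 0 := by
      rw [map_zero]
      exact Subtype.ext h0
    have := f.injective this
    exact hx₀0 (by simpa using congrArg Subtype.val this)
  set c : ℚ := y₀ / x₀ with hc
  have hc0 : c ≠ 0 := div_ne_zero hy₀0 hx₀0
  intro n
  obtain ⟨q, hq, hq0, hqv⟩ := h (n - padicValRat p c)
  refine ⟨(f ⟨q, hq⟩ : ℚ), (f ⟨q, hq⟩).2, ?_, ?_⟩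
  · have heq := aux_hom_mul M M' hM f.toAddMonoidHom x₀ hx₀ hx₀0 q hq hq0
    rw [show (f.toAddMonoidHom ⟨q, hq⟩ : ℚ) = (f ⟨q, hq⟩ : ℚ) from rfl] at heq
    rw [heq]
    exact mul_ne_zero (div_ne_zero hq0 hx₀0) hy₀0
  · have heq := aux_hom_mul M M' hM f.toAddMonoidHom x₀ hx₀ hx₀0 q hq hq0
    have h1 : (f.toAddMonoidHom ⟨q, hq⟩ : ℚ) = (f ⟨q, hq⟩ : ℚ) := rfl
    have h2 : (f.toAddMonoidHom ⟨x₀, hx₀⟩ : ℚ) = y₀ := rfl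
    rw [h1, h2] at heq
    have heq' : (f ⟨q, hq⟩ : ℚ) = c * q := by
      rw [heq, hc]
      field_simp
    rw [heq', padicValRat.mul hc0 hq0]
    linarith

/-- For isomorphic Puiseux monoids `M` and `M'` and a prime `p`, the `p`-adic
valuations of nonzero elements of `M` are unbounded below iff the same holds
for `M'`. -/
theorem stmt_2 (M M' : AddSubmonoid ℚ)
    (hM : ∀ x ∈ M, 0 ≤ x) (hM' : ∀ x ∈ M', 0 ≤ x)
    (p : ℕ) (hp : p.Prime) (hiso : Nonempty (M ≃+ M')) :
    (∀ n : ℤ, ∃ q ∈ M, q ≠ 0 ∧ padicValRat p q < n) ↔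
      (∀ n : ℤ, ∃ q ∈ M', q ≠ 0 ∧ padicValRat p q < n) := by
  obtain ⟨f⟩ := hiso
  exact ⟨aux_dir M M' hM p hp f, aux_dir M' M hM' p hp f.symm⟩
end

section
/- Every quasi-atomic cancellative commutative monoid is quasi-Furstenberg. -/
/-- `a` is an atom of the cancellative commutative monoid `M`. -/
def IsAtomG {M : Type*} [AddCancelCommMonoid M] (a : M) : Prop :=
  ¬ IsAddUnit a ∧ ∀ x y : M, a = x + y → IsAddUnit x ∨ IsAddUnit y

/-- `b` is atomic: invertible or a sum of atoms. -/
def AtomicG {M : Type*} [AddCancelCommMonoid M] (b : M) : Prop :=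
  IsAddUnit b ∨ b ∈ AddSubmonoid.closure {a : M | IsAtomG a}

/-- `x` divides `y` in `M`. -/
def DvdG {M : Type*} [AddCancelCommMonoid M] (x y : M) : Prop := ∃ d, y = x + d

/-- Every quasi-atomic cancellative commutative monoid is quasi-Furstenberg. -/
theorem stmt_3 {M : Type*} [AddCancelCommMonoid M]
    (hqa : ∀ b : M, ∃ c : M, AtomicG (b + c)) :
    ∀ b : M, ¬ IsAddUnit b →
      ∃ c a : M, IsAtomG a ∧ DvdG a (b + c) ∧ ¬ DvdG a c := by
  intro b hb
  by_contra h
  push_neg at h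
  -- h : ∀ c a, IsAtomG a → DvdG a (b + c) → DvdG a c
  obtain ⟨c, hc⟩ := hqa b
  rcases hc with hu | hcl
  · obtain ⟨y, hy⟩ := isAddUnit_iff_exists.mp hu
    exact hb (IsAddUnit.of_add_eq_zero (a := b) (c + y) (by rw [← add_assoc]; exact hy.1))
  · obtain ⟨l, hl, hsum⟩ := AddSubmonoid.exists_list_of_mem_closure hcl
    have key : ∀ l : List M, (∀ x ∈ l, IsAtomG x) → ∀ c, b + c = l.sum → IsAddUnit b := by
      intro l
      induction l with
      | nil => exact fun _ c hc => IsAddUnit.of_add_eq_zero (a := b) c (by simpa using hc)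
      | cons a l ih =>
        intro hal c hc
        have ha : IsAtomG a := hal a (by simp)
        rw [List.sum_cons] at hc
        obtain ⟨c', hc'⟩ := h c a ha ⟨l.sum, hc⟩
        have hbc' : b + c' = l.sum := by
          have : a + (b + c') = a + l.sum := by rw [hc'] at hc; rw [← hc]; abel
          exact add_left_cancel this
        exact ih (fun x hx => hal x (List.mem_cons_of_mem _ hx)) c' hbc'
    exact hb (key l hl c hsum.symm)
end

section
/- Every Puiseux monoid is either antimatter or quasi-atomic. -/
/-! If `a` is an atom of a Puiseux monoid `M` and `b ∈ M`, then `b / a` is a nonnegative rational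
`p / q`, so `q • b = p • a`. Hence `b + (q - 1) • b` is a sum of copies of `a`, i.e. atomic. -/

theorem Rat.exists_pos_nsmul_eq_nsmul {a b : ℚ} (ha : 0 < a) (hb : 0 ≤ b) :
    ∃ n m : ℕ, 0 < n ∧ n • b = m • a := by
  set r := b / a with hr
  have hnum : ((r.num.toNat : ℕ) : ℚ) = r.num := by
    exact_mod_cast Int.toNat_of_nonneg (Rat.num_nonneg.mpr (div_nonneg hb ha.le))
  refine ⟨r.den, r.num.toNat, r.den_pos, ?_⟩
  calc r.den • b = (r * r.den) * a := by rw [hr, nsmul_eq_mul]; field_simp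
    _ = r.num.toNat • a := by rw [Rat.mul_den_eq_num, nsmul_eq_mul, hnum]

theorem atomicIn_nsmul_of_isAtomIn {M : AddSubmonoid ℚ} {a : ℚ} (ha : IsAtomIn M a) (m : ℕ) :
    AtomicIn M (m • a) :=
  AddSubmonoid.nsmul_mem _ (AddSubmonoid.subset_closure (s := {a | IsAtomIn M a}) ha) m

theorem quasiAtomic_of_isAtomIn {M : AddSubmonoid ℚ} (hM : ∀ x ∈ M, 0 ≤ x) {a : ℚ}
    (ha : IsAtomIn M a) : QuasiAtomic M := by
  intro b hb
  have ha_pos : 0 < a := (hM a ha.1).lt_of_ne' ha.2.1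
  obtain ⟨n, m, hn, hnm⟩ := Rat.exists_pos_nsmul_eq_nsmul ha_pos (hM b hb)
  refine ⟨(n - 1) • b, nsmul_mem hb _, ?_⟩
  rw [← succ_nsmul', Nat.sub_add_cancel hn, hnm]
  exact atomicIn_nsmul_of_isAtomIn ha m

/-- Every Puiseux monoid is antimatter or quasi-atomic. -/
theorem stmt_4 (M : AddSubmonoid ℚ) (hM : ∀ x ∈ M, 0 ≤ x) :
    Antimatter M ∨ QuasiAtomic M := by
  refine or_iff_not_imp_left.mpr fun h => ?_
  obtain ⟨a, ha⟩ := not_forall_not.mp h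
  exact quasiAtomic_of_isAtomIn hM ha
end

section
/- Let M be the additive submonoid (ℕ₀ × {0}) ∪ (ℤ × ℕ) of ℤ². Then M is a Furstenberg monoid whose only atom is (1,0), but M is not quasi-atomic. -/
/-!
Subtracting `(1,0)` from a nonzero element of `M` stays in `M`, so `(1,0)` divides every
non-unit and no other element is an atom. Sums of atoms therefore lie on the axis `ℤ × {0}`,
which `(0,1) + c` never reaches for `c ∈ M`.
-/

/-- The submonoid `(ℕ₀ × {0}) ∪ (ℤ × ℕ)` of `ℤ²`. -/
def S6 : Set (ℤ × ℤ) := {v | (0 ≤ v.1 ∧ v.2 = 0) ∨ 0 < v.2}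

/-- `u` is invertible in the set `S`. -/
def IsUnitInSet (S : Set (ℤ × ℤ)) (u : ℤ × ℤ) : Prop := u ∈ S ∧ -u ∈ S

/-- `a` is an atom of the set `S`. -/
def IsAtomInSet (S : Set (ℤ × ℤ)) (a : ℤ × ℤ) : Prop :=
  a ∈ S ∧ ¬ IsUnitInSet S a ∧
    ∀ x ∈ S, ∀ y ∈ S, a = x + y → IsUnitInSet S x ∨ IsUnitInSet S y

/-- `b` is atomic in `S`: invertible or a sum of atoms. -/
def AtomicInSet (S : Set (ℤ × ℤ)) (b : ℤ × ℤ) : Prop :=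
  IsUnitInSet S b ∨ b ∈ AddSubmonoid.closure {a | IsAtomInSet S a}

namespace S6

theorem mem_iff {v : ℤ × ℤ} : v ∈ S6 ↔ (0 ≤ v.1 ∧ v.2 = 0) ∨ 0 < v.2 := Iff.rfl

theorem isUnitInSet_iff {u : ℤ × ℤ} : IsUnitInSet S6 u ↔ u = 0 := by
  simp only [IsUnitInSet, mem_iff, Prod.fst_neg, Prod.snd_neg, Prod.ext_iff, Prod.fst_zero,
    Prod.snd_zero]
  omega

theorem one_zero_mem : ((1 : ℤ), (0 : ℤ)) ∈ S6 := mem_iff.2 (Or.inl ⟨zero_le_one, rfl⟩)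

theorem sub_one_zero_mem {b : ℤ × ℤ} (hb : b ∈ S6) (hb0 : b ≠ 0) :
    b - ((1 : ℤ), (0 : ℤ)) ∈ S6 := by
  rw [mem_iff] at hb ⊢
  rw [Ne, Prod.ext_iff] at hb0
  simp only [Prod.fst_sub, Prod.snd_sub, Prod.fst_zero, Prod.snd_zero] at hb0 ⊢
  omega

theorem isAtomInSet_one_zero : IsAtomInSet S6 ((1 : ℤ), (0 : ℤ)) := by
  refine ⟨one_zero_mem, by simp [isUnitInSet_iff], fun x hx y hy hxy => ?_⟩
  simp only [isUnitInSet_iff, Prod.ext_iff, Prod.fst_add, Prod.snd_add, Prod.fst_zero,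
    Prod.snd_zero] at hxy ⊢
  rw [mem_iff] at hx hy
  omega

/-- An atom `a ≠ (1,0)` would split as `(a - (1,0)) + (1,0)` with both summands nonzero. -/
theorem eq_one_zero_of_isAtomInSet {a : ℤ × ℤ} (ha : IsAtomInSet S6 a) :
    a = ((1 : ℤ), (0 : ℤ)) := by
  obtain ⟨haS, hnu, hsplit⟩ := ha
  by_contra hne
  have ha0 : a ≠ 0 := fun h => hnu (isUnitInSet_iff.2 h)
  rcases hsplit _ (sub_one_zero_mem haS ha0) _ one_zero_mem (sub_add_cancel a _).symm with
    h | h <;> rw [isUnitInSet_iff] at h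
  · exact hne (sub_eq_zero.1 h)
  · simp [Prod.ext_iff] at h

theorem setOf_isAtomInSet : {a | IsAtomInSet S6 a} = {((1 : ℤ), (0 : ℤ))} :=
  Set.ext fun _ => ⟨eq_one_zero_of_isAtomInSet, fun h => h ▸ isAtomInSet_one_zero⟩

theorem not_atomicInSet_of_snd_pos {b : ℤ × ℤ} (hb : 0 < b.2) : ¬ AtomicInSet S6 b := by
  rintro (hu | hcl)
  · rw [isUnitInSet_iff] at hu
    simp [hu] at hb
  · rw [setOf_isAtomInSet, AddSubmonoid.mem_closure_singleton] at hcl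
    obtain ⟨n, rfl⟩ := hcl
    simp at hb

end S6

/-- `M = (ℕ₀ × {0}) ∪ (ℤ × ℕ)` is Furstenberg with unique atom `(1,0)`, but is
not quasi-atomic. -/
theorem stmt_6 :
    (∀ b ∈ S6, ¬ IsUnitInSet S6 b → ∃ a, IsAtomInSet S6 a ∧ b - a ∈ S6) ∧
    {a | IsAtomInSet S6 a} = {((1 : ℤ), (0 : ℤ))} ∧
    ¬ (∀ b ∈ S6, ∃ c ∈ S6, AtomicInSet S6 (b + c)) := by
  refine ⟨fun b hb hbu => ⟨_, S6.isAtomInSet_one_zero,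
    S6.sub_one_zero_mem hb fun h => hbu (S6.isUnitInSet_iff.2 h)⟩, S6.setOf_isAtomInSet,
    fun h => ?_⟩
  obtain ⟨c, hc, hat⟩ := h ((0 : ℤ), (1 : ℤ)) (S6.mem_iff.2 (Or.inr one_pos))
  refine S6.not_atomicInSet_of_snd_pos ?_ hat
  rw [S6.mem_iff] at hc
  simp only [Prod.snd_add]
  omega
end

section
/- Let M be the Puiseux monoid generated by {1/2} ∪ {1/3^n : n ∈ ℕ}. Then the set of atoms of M is exactly {1/2}. -/
/-- The Puiseux monoid generated by `{1/2} ∪ {1/3^n : n ∈ ℕ}`. -/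
def M7 : AddSubmonoid ℚ :=
  AddSubmonoid.closure ({1/2} ∪ {q : ℚ | ∃ n : ℕ, 0 < n ∧ q = 1/3^n})

lemma mem_M7 (a k n : ℕ) : (a:ℚ)/2 + (k:ℚ)/3^n ∈ M7 := by
  apply AddSubmonoid.add_mem
  · have h : (1/2 : ℚ) ∈ M7 := AddSubmonoid.subset_closure (Or.inl rfl)
    have h2 := AddSubmonoid.nsmul_mem M7 h a
    have e : a • (1/2 : ℚ) = (a:ℚ)/2 := by
      simp [nsmul_eq_mul]; ring
    rwa [e] at h2
  · have h : (1/3^(n+1) : ℚ) ∈ M7 :=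
      AddSubmonoid.subset_closure (Or.inr ⟨n+1, Nat.succ_pos n, rfl⟩)
    have h2 := AddSubmonoid.nsmul_mem M7 h (3*k)
    have e : (3*k) • (1/3^(n+1) : ℚ) = (k:ℚ)/3^n := by
      simp [nsmul_eq_mul]
      field_simp
      ring
    rwa [e] at h2

lemma M7_repr {q : ℚ} (hq : q ∈ M7) : ∃ a k n : ℕ, q = a/2 + k/3^n := by
  induction hq using AddSubmonoid.closure_induction with
  | mem x hx =>
    rcases hx with h | ⟨m, hm, h⟩
    · exact ⟨1, 0, 0, by rw [Set.mem_singleton_iff.mp h]; norm_num⟩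
    · exact ⟨0, 1, m, by rw [h]; norm_num⟩
  | zero => exact ⟨0, 0, 0, by norm_num⟩
  | add x y hx hy ihx ihy =>
    obtain ⟨a, k, n, rfl⟩ := ihx
    obtain ⟨a', k', n', rfl⟩ := ihy
    refine ⟨a + a', k * 3^n' + k' * 3^n, n + n', ?_⟩
    push_cast
    field_simp
    ring

lemma half_atom : IsAtomIn M7 (1/2) := by
  refine ⟨AddSubmonoid.subset_closure (Or.inl rfl), by norm_num, ?_⟩
  intro x hx y hy h
  obtain ⟨a, k, n, rfl⟩ := M7_repr hx
  obtain ⟨a', k', n', rfl⟩ := M7_repr hy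
  have key : (3:ℚ)^n * 3^n' = (a+a') * (3^n * 3^n') + 2*(k*3^n' + k'*3^n) := by
    have h1 : (3:ℚ)^n ≠ 0 := by positivity
    have h2 : (3:ℚ)^n' ≠ 0 := by positivity
    field_simp at h
    linear_combination h
  have keyN : 3^n * 3^n' = (a+a') * (3^n*3^n') + 2*(k*3^n' + k'*3^n) := by
    exact_mod_cast key
  have hodd : Odd (3^n * 3^n' : ℕ) := by
    rw [← pow_add]; exact Odd.pow (by decide)
  have hP : 0 < 3^n * 3^n' := by positivity
  have hA : (a+a') * (3^n*3^n') ≤ 3^n*3^n' := Nat.le.intro keyN.symm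
  have hle : a + a' ≤ 1 :=
    Nat.le_of_mul_le_mul_right (by simpa using hA) hP
  have hne : a + a' ≠ 0 := by
    intro h0
    rw [h0, zero_mul, zero_add] at keyN
    have hev : Even (3^n * 3^n' : ℕ) := ⟨k*3^n' + k'*3^n, by rw [keyN]; ring⟩
    exact (Nat.not_even_iff_odd.mpr hodd) hev
  have ha1 : a + a' = 1 := by omega
  rw [ha1, one_mul] at keyN
  have h2K : 2*(k*3^n' + k'*3^n) = 0 := (left_eq_add.mp keyN)
  have hK : k*3^n' + k'*3^n = 0 := by
    rcases Nat.mul_eq_zero.mp h2K with h0 | h0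
    · omega
    · exact h0
  have h3n : (0:ℕ) < 3^n := by positivity
  have h3n' : (0:ℕ) < 3^n' := by positivity
  have hk : k = 0 := by
    rcases Nat.add_eq_zero.mp hK with ⟨h1, _⟩
    rcases Nat.mul_eq_zero.mp h1 with h0 | h0
    · exact h0
    · omega
  have hk' : k' = 0 := by
    rcases Nat.add_eq_zero.mp hK with ⟨_, h2⟩
    rcases Nat.mul_eq_zero.mp h2 with h0 | h0
    · exact h0
    · omega
  subst hk hk'
  rcases Nat.add_eq_one_iff.mp ha1 with ⟨h1, _⟩ | ⟨_, h2⟩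
  · left; rw [h1]; norm_num
  · right; rw [h2]; norm_num

lemma atom_eq_half {q : ℚ} (hq : IsAtomIn M7 q) : q = 1/2 := by
  obtain ⟨hmem, hne, hatom⟩ := hq
  obtain ⟨a, k, n, rfl⟩ := M7_repr hmem
  have hk : k = 0 := by
    by_contra hk0
    have hk1 : 1 ≤ k := Nat.one_le_iff_ne_zero.mpr hk0
    have hx : ((1:ℕ):ℚ)/2*0 + (1:ℚ)/3^(n+1) ∈ M7 := by
      have := mem_M7 0 1 (n+1); simpa using this
    have hxm : (1:ℚ)/3^(n+1) ∈ M7 := by simpa using hx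
    have hym : ((a:ℚ))/2 + ((3*k-1 : ℕ):ℚ)/3^(n+1) ∈ M7 := mem_M7 a (3*k-1) (n+1)
    have heq : (a:ℚ)/2 + (k:ℚ)/3^n = (1:ℚ)/3^(n+1) + ((a:ℚ)/2 + ((3*k-1:ℕ):ℚ)/3^(n+1)) := by
      have hc : ((3*k-1 : ℕ):ℚ) = 3*(k:ℚ) - 1 := by
        push_cast [Nat.cast_sub (by omega : 1 ≤ 3*k)]; ring
      rw [hc]
      field_simp
      ring
    rcases hatom _ hxm _ hym heq with h0 | h0
    · have : (0:ℚ) < 1/3^(n+1) := by positivity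
      linarith [this, h0.symm.le]
    · have h1 : (0:ℚ) ≤ (a:ℚ)/2 := by positivity
      have h2 : (0:ℚ) < ((3*k-1:ℕ):ℚ)/3^(n+1) := by
        have : (0:ℕ) < 3*k-1 := by omega
        have : (0:ℚ) < ((3*k-1:ℕ):ℚ) := by exact_mod_cast this
        positivity
      linarith [h0.symm.le]
  subst hk
  have ha : a = 1 := by
    by_contra ha0
    have ha2 : 2 ≤ a := by
      rcases Nat.lt_or_ge a 2 with h | h
      · interval_cases a
        · simp at hne
        · exact absurd rfl ha0
      · omega
    have hxm : ((1:ℕ):ℚ)/2 + ((0:ℕ):ℚ)/3^0 ∈ M7 := mem_M7 1 0 0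
    have hym : (((a-1:ℕ)):ℚ)/2 + ((0:ℕ):ℚ)/3^0 ∈ M7 := mem_M7 (a-1) 0 0
    have heq : (a:ℚ)/2 + (0:ℕ)/3^n = (((1:ℕ):ℚ)/2 + ((0:ℕ):ℚ)/3^0) + ((((a-1:ℕ)):ℚ)/2 + ((0:ℕ):ℚ)/3^0) := by
      push_cast [Nat.cast_sub (by omega : 1 ≤ a)]
      ring
    rcases hatom _ hxm _ hym heq with h0 | h0
    · norm_num at h0
    · have hcast : ((a:ℚ)) = 1 := by
        have hc : ((a-1:ℕ):ℚ) = (a:ℚ) - 1 := by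
          push_cast [Nat.cast_sub (by omega : 1 ≤ a)]; ring
        rw [hc] at h0
        field_simp at h0
        linarith
      have : a = 1 := by exact_mod_cast hcast
      omega
  subst ha
  norm_num

/-- The set of atoms of `M7` is exactly `{1/2}`. -/
theorem stmt_7 : {a | IsAtomIn M7 a} = {(1/2 : ℚ)} := by
  ext q
  simp only [Set.mem_setOf_eq, Set.mem_singleton_iff]
  constructor
  · exact atom_eq_half
  · rintro rfl
    exact half_atom
end

section
/- Let M be a Puiseux monoid with exactly one atom. Then M is almost Furstenberg if and only if M is isomorphic to (ℕ₀, +). -/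
section PuiseuxMonoid

variable {M : AddSubmonoid ℚ}

theorem IsAtomIn.pos (hM : ∀ x ∈ M, 0 ≤ x) {a : ℚ} (ha : IsAtomIn M a) : 0 < a :=
  (hM a ha.1).lt_of_ne' ha.2.1

theorem IsAtomIn.not_dvdIn_zero (hM : ∀ x ∈ M, 0 ≤ x) {a : ℚ} (ha : IsAtomIn M a) :
    ¬ DvdIn M a 0 := fun h => by
  have := hM _ h
  linarith [ha.pos hM]

theorem Furstenberg.almostFurstenberg (hM : ∀ x ∈ M, 0 ≤ x) (h : Furstenberg M) :
    AlmostFurstenberg M := fun b hb hb0 => by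
  obtain ⟨a, ha, hab⟩ := h b hb hb0
  exact ⟨0, zero_mem _, a, ha, by simpa using hab, ha.not_dvdIn_zero hM⟩

theorem atomicIn_iff_of_atoms_eq {a : ℚ} (h : {x | IsAtomIn M x} = {a}) {c : ℚ} :
    AtomicIn M c ↔ ∃ n : ℕ, n • a = c := by
  rw [AtomicIn, h, AddSubmonoid.mem_closure_singleton]

theorem sub_mem_of_almostFurstenberg (hAF : AlmostFurstenberg M) {a : ℚ}
    (h : {x | IsAtomIn M x} = {a}) : ∀ b ∈ M, b ≠ 0 → b - a ∈ M := by
  intro b hb hb0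
  obtain ⟨c, hc, a', ha', hdvd, hndvd⟩ := hAF b hb hb0
  obtain rfl : a' = a := h.subset ha'
  obtain ⟨n, rfl⟩ := (atomicIn_iff_of_atoms_eq h).1 hc
  cases n with
  | zero => simpa [DvdIn] using hdvd
  | succ n =>
    refine absurd ?_ hndvd
    rw [DvdIn, succ_nsmul, add_sub_cancel_right]
    exact nsmul_mem ha'.1 n

theorem le_closure_singleton_of_sub_mem (hM : ∀ x ∈ M, 0 ≤ x) {a : ℚ} (ha : 0 < a)
    (h : ∀ b ∈ M, b ≠ 0 → b - a ∈ M) : M ≤ AddSubmonoid.closure {a} := by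
  suffices key : ∀ n : ℕ, ∀ b ∈ M, b ≤ n • a → b ∈ AddSubmonoid.closure {a} by
    intro b hb
    obtain ⟨n, hn⟩ := Archimedean.arch b ha
    exact key n b hb hn
  intro n
  induction n with
  | zero =>
    intro b hb hle
    obtain rfl : b = 0 := le_antisymm (by simpa using hle) (hM b hb)
    exact zero_mem _
  | succ n ih =>
    intro b hb hle
    by_cases hb0 : b = 0
    · exact hb0 ▸ zero_mem _
    · have hrest := ih (b - a) (h b hb hb0) (by rw [succ_nsmul] at hle; linarith)
      simpa using add_mem hrest (AddSubmonoid.subset_closure rfl)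

theorem multiplesHom_injective {a : ℚ} (ha : a ≠ 0) : Function.Injective (multiplesHom ℚ a) :=
  fun m n h => by simpa [ha] using h

noncomputable def closureSingletonEquivNat {a : ℚ} (ha : a ≠ 0) :
    AddSubmonoid.closure {a} ≃+ ℕ :=
  (AddEquiv.addSubmonoidCongr (AddSubmonoid.closure_singleton_eq a)).trans
    (AddEquiv.ofLeftInverse' _ (Function.leftInverse_invFun (multiplesHom_injective ha))).symm

theorem addEquiv_nat_apply_eq_zero_iff (e : M ≃+ ℕ) {x : ℚ} (hx : x ∈ M) :
    e ⟨x, hx⟩ = 0 ↔ x = 0 := by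
  rw [e.map_eq_zero_iff, AddSubmonoid.mk_eq_zero]

theorem isAtomIn_of_addEquiv_nat (e : M ≃+ ℕ) : IsAtomIn M (e.symm 1) := by
  refine ⟨(e.symm 1).2, fun h => ?_, fun x hx y hy hxy => ?_⟩
  · simpa using (addEquiv_nat_apply_eq_zero_iff e (e.symm 1).2).2 h
  · have hsum : e ⟨x, hx⟩ + e ⟨y, hy⟩ = 1 := by
      rw [← map_add, ← e.apply_symm_apply 1]
      exact congrArg e (Subtype.ext hxy.symm)
    rcases Nat.add_eq_one_iff.1 hsum with ⟨h0, -⟩ | ⟨-, h0⟩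
    exacts [.inl ((addEquiv_nat_apply_eq_zero_iff e hx).1 h0),
      .inr ((addEquiv_nat_apply_eq_zero_iff e hy).1 h0)]

theorem furstenberg_of_addEquiv_nat (e : M ≃+ ℕ) : Furstenberg M := by
  intro b hb hb0
  refine ⟨_, isAtomIn_of_addEquiv_nat e, ?_⟩
  obtain ⟨n, hn⟩ := Nat.exists_eq_add_one_of_ne_zero
    (mt (addEquiv_nat_apply_eq_zero_iff e hb).1 hb0)
  have hb' : b = e.symm n + e.symm 1 := by
    rw [← AddSubmonoid.coe_add, ← map_add, ← hn, e.symm_apply_apply]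
  rw [DvdIn, hb', add_sub_cancel_right]
  exact (e.symm n).2

end PuiseuxMonoid

/-- A Puiseux monoid with exactly one atom is almost Furstenberg iff it is
isomorphic to `(ℕ₀, +)`. -/
theorem stmt_9 (M : AddSubmonoid ℚ) (hM : ∀ x ∈ M, 0 ≤ x)
    (hone : ∃! a, IsAtomIn M a) :
    AlmostFurstenberg M ↔ Nonempty (M ≃+ ℕ) := by
  obtain ⟨a, ha, hu⟩ := hone
  have hatoms : {x | IsAtomIn M x} = {a} := Set.ext fun x => ⟨hu x, fun hx => hx ▸ ha⟩
  constructor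
  · intro hAF
    have hMa : M = AddSubmonoid.closure {a} :=
      le_antisymm (le_closure_singleton_of_sub_mem hM (ha.pos hM)
          (sub_mem_of_almostFurstenberg hAF hatoms))
        (AddSubmonoid.closure_le.2 (Set.singleton_subset_iff.2 ha.1))
    exact ⟨(AddEquiv.addSubmonoidCongr hMa).trans (closureSingletonEquivNat (ha.pos hM).ne')⟩
  · rintro ⟨e⟩
    exact (furstenberg_of_addEquiv_nat e).almostFurstenberg hM
end

section
/- For each odd prime p, let M_p be the Puiseux monoid generated by {1/2} ∪ {1/p^n : n ∈ ℕ}. Then M_p is quasi-Furstenberg but not almost Furstenberg, and for distinct odd primes p ≠ q the monoids M_p and M_q are not isomorphic. -/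
/-- The Puiseux monoid generated by `{1/2} ∪ {1/p^n : n ∈ ℕ}`. -/
def Mpow (p : ℕ) : AddSubmonoid ℚ :=
  AddSubmonoid.closure ({1/2} ∪ {q : ℚ | ∃ n : ℕ, 0 < n ∧ q = 1/(p : ℚ)^n})

def Dp (p : ℕ) (x : ℚ) : Prop := ∃ m n : ℕ, x = m / p^n

lemma Dp_zero (p : ℕ) : Dp p 0 := ⟨0, 0, by norm_num⟩

lemma Dp_nonneg {p : ℕ} {x : ℚ} (h : Dp p x) : 0 ≤ x := by
  obtain ⟨m, n, rfl⟩ := h; positivity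

lemma Dp_add {p : ℕ} (hp : p ≠ 0) {x y : ℚ} (hx : Dp p x) (hy : Dp p y) : Dp p (x + y) := by
  obtain ⟨m, n, rfl⟩ := hx; obtain ⟨m', n', rfl⟩ := hy
  refine ⟨m * p ^ n' + m' * p ^ n, n + n', ?_⟩
  have hp0 : (p : ℚ) ≠ 0 := Nat.cast_ne_zero.mpr hp
  push_cast
  rw [pow_add]
  rw [div_add_div _ _ (by positivity) (by positivity)]
  congr 1
  ring

lemma mem_Mpow {p : ℕ} (hp : p ≠ 0) {x : ℚ} :
    x ∈ Mpow p ↔ ∃ a : ℕ, ∃ y, Dp p y ∧ x = a / 2 + y := by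
  have hp0 : (p : ℚ) ≠ 0 := Nat.cast_ne_zero.mpr hp
  constructor
  · intro h
    induction h using AddSubmonoid.closure_induction with
    | mem z hz =>
      rcases hz with hz | ⟨n, hn, rfl⟩
      · exact ⟨1, 0, Dp_zero p, by rw [Set.mem_singleton_iff.mp hz]; norm_num⟩
      · exact ⟨0, 1/p^n, ⟨1, n, by norm_num⟩, by norm_num⟩
    | zero => exact ⟨0, 0, Dp_zero p, by norm_num⟩
    | add a b _ _ iha ihb =>
      obtain ⟨a1, y1, hy1, rfl⟩ := iha
      obtain ⟨a2, y2, hy2, rfl⟩ := ihb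
      exact ⟨a1 + a2, y1 + y2, Dp_add hp hy1 hy2, by push_cast; ring⟩
  · rintro ⟨a, y, ⟨m, n, rfl⟩, rfl⟩
    have h1 : (1/2 : ℚ) ∈ Mpow p :=
      AddSubmonoid.subset_closure (Set.mem_union_left _ rfl)
    have h2 : (1/(p:ℚ)^(n+1)) ∈ Mpow p :=
      AddSubmonoid.subset_closure (Set.mem_union_right _ ⟨n+1, Nat.succ_pos n, rfl⟩)
    have ha : (a : ℚ)/2 = a • (1/2 : ℚ) := by push_cast; ring
    have hm : (m : ℚ)/p^n = (m * p) • (1/(p:ℚ)^(n+1)) := by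
      push_cast
      field_simp
      rw [nsmul_eq_mul]; push_cast; field_simp; ring
    rw [ha, hm]
    exact AddSubmonoid.add_mem _ (AddSubmonoid.nsmul_mem _ h1 a) (AddSubmonoid.nsmul_mem _ h2 _)

lemma Mpow_nonneg {p : ℕ} (hp : p ≠ 0) {x : ℚ} (h : x ∈ Mpow p) : 0 ≤ x := by
  obtain ⟨a, y, hy, rfl⟩ := (mem_Mpow hp).mp h
  have := Dp_nonneg hy
  positivity

lemma key_parity {p : ℕ} (hodd : Odd p) {x y : ℚ} (hx : Dp p x) (hy : Dp p y) :
    x - y ≠ 1/2 := by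
  have hp : p ≠ 0 := by rintro rfl; simp [Nat.odd_iff] at hodd
  have hp0 : (p : ℚ) ≠ 0 := Nat.cast_ne_zero.mpr hp
  obtain ⟨m, n, rfl⟩ := hx; obtain ⟨m', n', rfl⟩ := hy
  intro h
  field_simp at h
  have h2 : (m : ℚ) * p ^ n' * 2 = p^n * p^n' + 2 * m' * p^n := by linarith
  have h3 : m * p ^ n' * 2 = p^n * p^n' + 2 * m' * p^n := by exact_mod_cast h2
  have hoddpow : Odd (p ^ n * p ^ n') := hodd.pow.mul hodd.pow
  obtain ⟨k, hk⟩ := hoddpow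
  rw [hk] at h3
  have hOdd : Odd (m * p ^ n' * 2) := by rw [h3]; exact ⟨k + m' * p ^ n, by ring⟩
  have hEven : Even (m * p ^ n' * 2) := ⟨m * p ^ n', by ring⟩
  exact (Nat.not_odd_iff_even.mpr hEven) hOdd

lemma half_mem (p : ℕ) : (1/2 : ℚ) ∈ Mpow p :=
  AddSubmonoid.subset_closure (Set.mem_union_left _ rfl)

lemma halfmul_mem {p : ℕ} (hp : p ≠ 0) (k : ℕ) : ((k : ℚ)/2) ∈ Mpow p :=
  (mem_Mpow hp).mpr ⟨k, 0, Dp_zero p, by norm_num⟩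

lemma atom_half {p : ℕ} (hodd : Odd p) : IsAtomIn (Mpow p) (1/2) := by
  have hp : p ≠ 0 := by rintro rfl; simp [Nat.odd_iff] at hodd
  refine ⟨half_mem p, by norm_num, ?_⟩
  intro x hx y hy hxy
  obtain ⟨a1, y1, hy1, rfl⟩ := (mem_Mpow hp).mp hx
  obtain ⟨a2, y2, hy2, rfl⟩ := (mem_Mpow hp).mp hy
  have hn1 := Dp_nonneg hy1
  have hn2 := Dp_nonneg hy2
  by_cases h : a1 + a2 = 0
  · exfalso
    have ha1 : a1 = 0 := by omega
    have ha2 : a2 = 0 := by omega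
    refine key_parity hodd (Dp_add hp hy1 hy2) (Dp_zero p) ?_
    subst ha1 ha2
    push_cast at hxy ⊢
    linarith
  · have h1 : (1 : ℚ) ≤ (a1 : ℚ) + a2 := by exact_mod_cast Nat.one_le_iff_ne_zero.mpr h
    have hz1 : y1 = 0 := by linarith
    have hz2 : y2 = 0 := by linarith
    have hsum : (a1 : ℚ) + a2 = 1 := by linarith
    have hsum' : a1 + a2 = 1 := by exact_mod_cast hsum
    rcases Nat.eq_zero_or_pos a1 with h1' | h1'
    · left; rw [h1', hz1]; norm_num
    · right
      have ha2 : a2 = 0 := by omega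
      rw [ha2, hz2]; norm_num

lemma atom_eq_half_s10 {p : ℕ} (hp : p.Prime) (hodd : Odd p) {a : ℚ}
    (ha : IsAtomIn (Mpow p) a) : a = 1/2 := by
  have hp0 : p ≠ 0 := hp.ne_zero
  have hp2 : 2 ≤ p := hp.two_le
  obtain ⟨haM, hne, hsplit⟩ := ha
  obtain ⟨α, y, hy, rfl⟩ := (mem_Mpow hp0).mp haM
  obtain ⟨m, n, rfl⟩ := hy
  have hpq : (0:ℚ) < (p:ℚ) := by exact_mod_cast hp.pos
  by_cases h0 : α = 0
  · exfalso
    subst h0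
    have hm : m ≠ 0 := by
      rintro rfl; simp at hne
    have hx : (1/(p:ℚ)^(n+1)) ∈ Mpow p :=
      (mem_Mpow hp0).mpr ⟨0, 1/(p:ℚ)^(n+1), ⟨1, n+1, by norm_num⟩, by norm_num⟩
    have hy' : (((m*p-1 : ℕ)):ℚ)/(p:ℚ)^(n+1) ∈ Mpow p :=
      (mem_Mpow hp0).mpr ⟨0, _, ⟨m*p-1, n+1, rfl⟩, by norm_num⟩
    have hmp : 1 ≤ m * p := Nat.one_le_iff_ne_zero.mpr (by positivity)
    have hcast : (((m*p-1 : ℕ)):ℚ) = (m:ℚ)*p - 1 := by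
      push_cast [Nat.cast_sub hmp]; ring
    have hsum : (0:ℚ)/2 + (m:ℚ)/p^n = 1/(p:ℚ)^(n+1) + ((m*p-1 : ℕ):ℚ)/(p:ℚ)^(n+1) := by
      rw [hcast]
      field_simp
      ring
    rcases hsplit _ hx _ hy' hsum with h | h
    · exact absurd h (by positivity)
    · rw [hcast] at h
      have : (m:ℚ)*p - 1 = 0 := by
        field_simp at h
        linarith [h]
      have h2 : (2:ℚ) ≤ (m:ℚ)*p := by
        have : (1:ℚ) ≤ (m:ℚ) := by exact_mod_cast Nat.one_le_iff_ne_zero.mpr hm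
        have : (2:ℚ) ≤ (p:ℚ) := by exact_mod_cast hp2
        nlinarith
      linarith
  · have hα1 : 1 ≤ α := Nat.one_le_iff_ne_zero.mpr h0
    by_cases hcase : α = 1 ∧ (m:ℚ)/p^n = 0
    · rw [hcase.1, hcase.2]; norm_num
    · exfalso
      have hyn : (0:ℚ) ≤ (m:ℚ)/p^n := by positivity
      have hrest : ((α - 1 : ℕ):ℚ)/2 + (m:ℚ)/p^n ∈ Mpow p :=
        (mem_Mpow hp0).mpr ⟨α - 1, _, ⟨m, n, rfl⟩, rfl⟩
      have hc : ((α - 1 : ℕ):ℚ) = (α:ℚ) - 1 := by push_cast [Nat.cast_sub hα1]; ring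
      have hsum : (α:ℚ)/2 + (m:ℚ)/p^n = 1/2 + (((α-1:ℕ):ℚ)/2 + (m:ℚ)/p^n) := by
        rw [hc]; ring
      rcases hsplit _ (half_mem p) _ hrest hsum with h | h
      · norm_num at h
      · rw [hc] at h
        have hge : (0:ℚ) ≤ (α:ℚ) - 1 := by
          have : (1:ℚ) ≤ (α:ℚ) := by exact_mod_cast hα1
          linarith
        have h1 : (α:ℚ) = 1 := by linarith
        have h2 : (m:ℚ)/p^n = 0 := by linarith
        exact hcase ⟨by exact_mod_cast h1, h2⟩

lemma atomic_half {p : ℕ} (hp : p.Prime) (hodd : Odd p) {c : ℚ}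
    (hc : AtomicIn (Mpow p) c) : ∃ k : ℕ, c = k/2 := by
  have hsub : {a | IsAtomIn (Mpow p) a} ⊆ {(1/2 : ℚ)} := fun a ha => atom_eq_half_s10 hp hodd ha
  have := AddSubmonoid.closure_mono hsub hc
  rw [AddSubmonoid.closure_singleton_eq] at this
  obtain ⟨n, hn⟩ := this
  refine ⟨n, ?_⟩
  rw [← hn, multiplesHom_apply, nsmul_eq_mul]
  ring

lemma QF {p : ℕ} (hp : p.Prime) (hodd : Odd p) : QuasiFurstenberg (Mpow p) := by
  intro b hb hb0
  have hp0 : p ≠ 0 := hp.ne_zero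
  by_cases hH : b - 1/2 ∈ Mpow p
  · refine ⟨0, (Mpow p).zero_mem, 1/2, atom_half hodd, ?_, ?_⟩
    · show b + 0 - 1/2 ∈ Mpow p
      simpa using hH
    · intro h
      have := Mpow_nonneg hp0 h
      norm_num at this
  · obtain ⟨a, y, hy, rfl⟩ := (mem_Mpow hp0).mp hb
    have ha0 : a = 0 := by
      by_contra ha
      apply hH
      have h1 : 1 ≤ a := Nat.one_le_iff_ne_zero.mpr ha
      have heq : (a:ℚ)/2 + y - 1/2 = ((a-1:ℕ):ℚ)/2 + y := by
        push_cast [Nat.cast_sub h1]; ring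
      rw [heq]
      exact (mem_Mpow hp0).mpr ⟨a-1, y, hy, rfl⟩
    subst ha0
    obtain ⟨m, n, rfl⟩ := hy
    have hbpos : (0:ℚ) < (m:ℚ)/p^n := by
      rcases lt_or_eq_of_le (by positivity : (0:ℚ) ≤ (m:ℚ)/p^n) with h | h
      · exact h
      · exfalso; apply hb0; rw [← h]; norm_num
    have hble : (m:ℚ)/p^n ≤ 1 := by
      by_contra hgt
      push_neg at hgt
      apply hH
      have hppos : (0:ℚ) < (p:ℚ)^n := by
        have : (0:ℚ) < (p:ℚ) := by exact_mod_cast hp.pos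
        positivity
      have hmn : p^n ≤ m := by
        have : ((p:ℚ))^n < m := (one_lt_div hppos).mp hgt
        exact_mod_cast this.le
      have heq : (0:ℕ)/2 + (m:ℚ)/p^n - 1/2 = ((1:ℕ):ℚ)/2 + ((m - p^n : ℕ):ℚ)/p^n := by
        push_cast [Nat.cast_sub hmn]
        field_simp
        ring
      rw [show ((0:ℕ):ℚ)/2 + (m:ℚ)/p^n - 1/2 = ((1:ℕ):ℚ)/2 + ((m - p^n : ℕ):ℚ)/p^n from heq]
      exact (mem_Mpow hp0).mpr ⟨1, _, ⟨m - p^n, n, rfl⟩, rfl⟩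
    have hppos : (0:ℚ) < (p:ℚ)^n := by
      have : (0:ℚ) < (p:ℚ) := by exact_mod_cast hp.pos
      positivity
    have hmn : m ≤ p^n := by
      have : (m:ℚ) ≤ (p:ℚ)^n := by
        rw [div_le_one hppos] at hble; exact hble
      exact_mod_cast this
    have hcast : ((p^n - m : ℕ):ℚ) = (p:ℚ)^n - m := by push_cast [Nat.cast_sub hmn]; ring
    have hDc : Dp p ((((p^n - m : ℕ)):ℚ) / (p:ℚ)^n) := ⟨p^n - m, n, rfl⟩
    have hcM : (((p^n - m : ℕ)):ℚ) / (p:ℚ)^n ∈ Mpow p :=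
      (mem_Mpow hp0).mpr ⟨0, _, hDc, by norm_num⟩
    have hcval : (((p^n - m : ℕ)):ℚ) / (p:ℚ)^n = 1 - (m:ℚ)/p^n := by
      rw [hcast]; field_simp
    refine ⟨_, hcM, 1/2, atom_half hodd, ?_, ?_⟩
    · show (0:ℕ)/2 + (m:ℚ)/p^n + (((p^n - m : ℕ)):ℚ) / (p:ℚ)^n - 1/2 ∈ Mpow p
      rw [hcval]
      have : ((0:ℕ):ℚ)/2 + (m:ℚ)/p^n + (1 - (m:ℚ)/p^n) - 1/2 = 1/2 := by push_cast; ring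
      rw [this]
      exact half_mem p
    · intro hdvd
      obtain ⟨a', z, hz, heq⟩ := (mem_Mpow hp0).mp hdvd
      have hz0 := Dp_nonneg hz
      rw [hcval] at heq
      have ha' : a' = 0 := by
        by_contra ha'
        have h1 : (1:ℚ) ≤ (a':ℚ) := by exact_mod_cast Nat.one_le_iff_ne_zero.mpr ha'
        have : 1 - (m:ℚ)/p^n - 1/2 < 1/2 := by linarith
        linarith
      subst ha'
      refine key_parity hodd hDc hz ?_
      push_cast at heq
      rw [hcval]
      linarith

lemma notAF {p : ℕ} (hp : p.Prime) (hodd : Odd p) : ¬ AlmostFurstenberg (Mpow p) := by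
  intro H
  have hp0 : p ≠ 0 := hp.ne_zero
  have hp3 : 3 ≤ p := by
    rcases hp.two_le.lt_or_eq with h | h
    · omega
    · exfalso; rw [← h] at hodd; simp [Nat.odd_iff] at hodd
  have hbM : (1/(p:ℚ)) ∈ Mpow p :=
    AddSubmonoid.subset_closure (Set.mem_union_right _ ⟨1, one_pos, by norm_num⟩)
  have hppos : (0:ℚ) < (p:ℚ) := by exact_mod_cast hp.pos
  have hbne : (1/(p:ℚ)) ≠ 0 := by positivity
  obtain ⟨c, hc, a, ha, hdvd, hndvd⟩ := H _ hbM hbne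
  obtain rfl := atom_eq_half_s10 hp hodd ha
  obtain ⟨k, rfl⟩ := atomic_half hp hodd hc
  rcases Nat.eq_zero_or_pos k with hk | hk
  · subst hk
    have hnn := Mpow_nonneg hp0 hdvd
    have h3 : (3:ℚ) ≤ (p:ℚ) := by exact_mod_cast hp3
    have hle : (1:ℚ)/p ≤ 1/3 := by
      rw [div_le_div_iff₀ hppos (by norm_num)]; linarith
    simp only [Nat.cast_zero, zero_div, add_zero] at hnn
    linarith
  · apply hndvd
    show (k:ℚ)/2 - 1/2 ∈ Mpow p
    have : (k:ℚ)/2 - 1/2 = ((k-1:ℕ):ℚ)/2 := by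
      push_cast [Nat.cast_sub hk]; ring
    rw [this]
    exact halfmul_mem hp0 _

lemma hom_is_mul {p q : ℕ} (hp0 : p ≠ 0) (f : Mpow p →+ Mpow q) (x : Mpow p) :
    ((f x : ℚ)) = (2 * ((f ⟨1/2, half_mem p⟩ : ℚ))) * (x : ℚ) := by
  set h : Mpow p := ⟨1/2, half_mem p⟩ with hh
  have hv0 : 0 ≤ (x : ℚ) := Mpow_nonneg hp0 x.2
  have hnum0 : (0:ℤ) ≤ (x : ℚ).num := Rat.num_nonneg.mpr hv0
  have hden : ((x:ℚ).den : ℚ) ≠ 0 := by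
    exact_mod_cast (x:ℚ).den_nz
  have htn : (((x:ℚ).num.toNat : ℕ) : ℚ) = ((x:ℚ).num : ℚ) := by
    exact_mod_cast congrArg (fun z : ℤ => (z : ℚ)) (Int.toNat_of_nonneg hnum0)
  have key : (x:ℚ).den • x = (2 * (x:ℚ).num.toNat) • h := by
    apply Subtype.ext
    push_cast
    rw [nsmul_eq_mul, nsmul_eq_mul]
    push_cast [Int.toNat_of_nonneg hnum0]
    rw [mul_comm ((x:ℚ).den : ℚ) (x:ℚ), Rat.mul_den_eq_num, htn]
    ring
  have key2 := congrArg f key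
  rw [map_nsmul, map_nsmul] at key2
  have hQ : ((x:ℚ).den : ℚ) * ((f x : ℚ)) = (2 * ((x:ℚ).num : ℚ)) * ((f h : ℚ)) := by
    have := congrArg (fun z : Mpow q => (z : ℚ)) key2
    rw [show ((((x:ℚ).den • f x : Mpow q)) : ℚ) = ((x:ℚ).den : ℕ) • ((f x : ℚ)) from rfl,
        show (((2 * (x:ℚ).num.toNat) • f h : Mpow q) : ℚ) = (2 * (x:ℚ).num.toNat) • ((f h : ℚ)) from rfl] at this
    rw [nsmul_eq_mul, nsmul_eq_mul] at this
    push_cast at this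
    rw [htn] at this
    linarith [this]
  have hv : (x:ℚ) = ((x:ℚ).num : ℚ) / ((x:ℚ).den : ℚ) := (Rat.num_div_den _).symm
  rw [hv]
  field_simp
  linarith [hQ]

lemma noniso {p q : ℕ} (hp : p.Prime) (hq : q.Prime) (hop : Odd p) (hoq : Odd q)
    (hne : p ≠ q) : ¬ Nonempty (Mpow p ≃+ Mpow q) := by
  rintro ⟨e⟩
  have hp0 : p ≠ 0 := hp.ne_zero
  have hq0 : q ≠ 0 := hq.ne_zero
  have hp0' : ((p:ℚ)) ≠ 0 := Nat.cast_ne_zero.mpr hp0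
  have hq0' : ((q:ℚ)) ≠ 0 := Nat.cast_ne_zero.mpr hq0
  set f := e.toAddMonoidHom with hf
  set r : ℚ := 2 * ((f ⟨1/2, half_mem p⟩ : ℚ)) with hr
  have hmul : ∀ x : Mpow p, ((f x : ℚ)) = r * x := hom_is_mul hp0 f
  have hrne : r ≠ 0 := by
    intro h0
    have h1 : ((f ⟨1/2, half_mem p⟩ : ℚ)) = 0 := by
      rw [hr] at h0; linarith
    have h2 : f ⟨1/2, half_mem p⟩ = 0 := Subtype.ext h1
    have h3 : (⟨1/2, half_mem p⟩ : Mpow p) = (0 : Mpow p) := e.injective (by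
      rw [hf] at h2; simpa using h2)
    have h4 := congrArg (fun z : Mpow p => (z : ℚ)) h3
    norm_num at h4
  have hrpos : 0 < r := by
    rcases lt_or_eq_of_le (by
      rw [hr]
      have := Mpow_nonneg hq0 (f ⟨1/2, half_mem p⟩).2
      linarith : (0:ℚ) ≤ r) with h | h
    · exact h
    · exact absurd h.symm hrne
  have hnumpos : 0 < r.num := Rat.num_pos.mpr hrpos
  set n : ℕ := r.num.toNat with hn
  have hnpos : 0 < n := by omega
  have hxmem : (1/(p:ℚ)^(n+1)) ∈ Mpow p :=
    AddSubmonoid.subset_closure (Set.mem_union_right _ ⟨n+1, Nat.succ_pos _, rfl⟩)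
  have hmemq : r * (1/(p:ℚ)^(n+1)) ∈ Mpow q := by
    have hfx := hmul ⟨_, hxmem⟩
    rw [← hfx]
    exact (f ⟨_, hxmem⟩).2
  obtain ⟨a, y, ⟨m, k, rfl⟩, heq⟩ := (mem_Mpow hq0).mp hmemq
  have hpne : ((p:ℚ))^(n+1) ≠ 0 := pow_ne_zero _ hp0'
  have hqne : ((q:ℚ))^k ≠ 0 := pow_ne_zero _ hq0'
  have heq2 : r = ((a:ℚ)/2 + (m:ℚ)/(q:ℚ)^k) * (p:ℚ)^(n+1) := by
    field_simp at heq ⊢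
    linarith [heq]
  have hE : r * (2 * (q:ℚ)^k) = ((a * q^k + 2*m : ℕ):ℚ) * (p:ℚ)^(n+1) := by
    rw [heq2]
    push_cast
    field_simp
  have h1 : ((r.num:ℚ)) * (2 * (q:ℚ)^k) = ((a * q^k + 2*m : ℕ):ℚ) * (p:ℚ)^(n+1) * ((r.den:ℚ)) := by
    have := congrArg (fun z : ℚ => z * ((r.den:ℚ))) hE
    rw [show r * (2 * (q:ℚ)^k) * ((r.den:ℚ)) = (r * r.den) * (2 * (q:ℚ)^k) from by ring,
        Rat.mul_den_eq_num] at this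
    linarith [this]
  have hZ : (n : ℤ) * (2 * q^k) = ((a * q^k + 2*m : ℕ):ℤ) * (p:ℤ)^(n+1) * (r.den : ℤ) := by
    have hnn : ((n:ℤ)) = r.num := Int.toNat_of_nonneg hnumpos.le
    rw [hnn]
    exact_mod_cast h1
  have hZn : n * (2 * q^k) = (a * q^k + 2*m) * p^(n+1) * r.den := by exact_mod_cast hZ
  have hdvd : p^(n+1) ∣ n * (2*q^k) := ⟨(a * q^k + 2*m) * r.den, by rw [hZn]; ring⟩
  have cop2 : Nat.Coprime p 2 := by
    rw [hp.coprime_iff_not_dvd]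
    intro h
    have := (Nat.prime_dvd_prime_iff_eq hp Nat.prime_two).mp h
    rw [this] at hop
    simp [Nat.odd_iff] at hop
  have copq : Nat.Coprime p q := (Nat.coprime_primes hp hq).mpr hne
  have hcop : Nat.Coprime (p^(n+1)) (2*q^k) :=
    Nat.Coprime.pow_left _ (Nat.Coprime.mul_right cop2 (Nat.Coprime.pow_right _ copq))
  have hdvd2 : p^(n+1) ∣ n := hcop.dvd_of_dvd_mul_right hdvd
  have hle : p^(n+1) ≤ n := Nat.le_of_dvd hnpos hdvd2
  have hlt : n < 2^(n+1) := (Nat.lt_two_pow_self (n := n)).trans_le (Nat.pow_le_pow_right (by norm_num) (Nat.le_succ n))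
  have h2p : 2^(n+1) ≤ p^(n+1) := Nat.pow_le_pow_left hp.two_le _
  omega

/-- For odd primes `p`, the monoid `Mpow p` is quasi-Furstenberg but not almost
Furstenberg, and for distinct odd primes `p ≠ q` the monoids `Mpow p` and
`Mpow q` are not isomorphic. -/
theorem stmt_10 (p : ℕ) (hp : p.Prime) (hodd : Odd p) :
    QuasiFurstenberg (Mpow p) ∧ ¬ AlmostFurstenberg (Mpow p) ∧
      ∀ q : ℕ, q.Prime → Odd q → p ≠ q → ¬ Nonempty (Mpow p ≃+ Mpow q) :=
  ⟨QF hp hodd, notAF hp hodd, fun q hq hoq hne => noniso hp hq hodd hoq hne⟩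
end

section
/- There exists a Puiseux monoid that is both almost Furstenberg and nearly Furstenberg but not Furstenberg. -/
/-!
Let `G` be the ring of rationals whose denominator is prime to `15`, and let `M` consist of the
elements `s + g` with `s ∈ {0, 1/3, 2/5}` and `0 ≤ g ∈ G`, together with every rational `> 3/5`.
Since `G` is closed under halving, no nonzero element of `G` is an atom, so every atom is at least
`1/3` and the element `1/4` is divisible by no atom. Two nonzero offsets already sum past `3/5`,
and `1/3`, `2/5`, `2/5 - 1/3` lie outside `G`; hence `1/3` and `2/5` are atoms. Finally
`3/5 ∉ M` while `b + 3/5 ∈ M` for every nonzero `b ∈ M`, so the atom `2/5` divides `b + 1` but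
not the atomic element `1 = 1/3 + 1/3 + 1/3`.
-/

section FurstenbergCriteria

variable {M : AddSubmonoid ℚ}

theorem not_furstenberg_of_lt_isAtomIn (hM : ∀ x ∈ M, 0 ≤ x) {b : ℚ} (hb : b ∈ M)
    (hb0 : b ≠ 0) (hlt : ∀ a, IsAtomIn M a → b < a) : ¬ Furstenberg M := by
  intro hF
  obtain ⟨a, ha, hab⟩ := hF b hb hb0
  have : 0 ≤ b - a := hM _ hab
  linarith [hlt a ha]

theorem exists_isAtomIn_dvdIn_add_of_not_mem {a e : ℚ} (ha : IsAtomIn M a) (he : e ∉ M)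
    (hshift : ∀ b ∈ M, b ≠ 0 → b + e ∈ M) (b : ℚ) (hb : b ∈ M) (hb0 : b ≠ 0) :
    ∃ a', IsAtomIn M a' ∧ DvdIn M a' (b + (a + e)) ∧ ¬ DvdIn M a' (a + e) := by
  refine ⟨a, ha, ?_, ?_⟩
  · simpa [DvdIn, add_sub_assoc] using hshift b hb hb0
  · simpa [DvdIn] using he

theorem nearlyFurstenberg_of_not_mem {a e : ℚ} (ha : IsAtomIn M a) (he : e ∉ M)
    (hshift : ∀ b ∈ M, b ≠ 0 → b + e ∈ M) : NearlyFurstenberg M :=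
  ⟨a + e, by simpa [add_comm] using hshift a ha.1 ha.2.1,
    exists_isAtomIn_dvdIn_add_of_not_mem ha he hshift⟩

theorem almostFurstenberg_of_not_mem {a e : ℚ} (ha : IsAtomIn M a) (he : e ∉ M)
    (hshift : ∀ b ∈ M, b ≠ 0 → b + e ∈ M) (hc : AtomicIn M (a + e)) :
    AlmostFurstenberg M :=
  fun b hb hb0 => ⟨a + e, hc, exists_isAtomIn_dvdIn_add_of_not_mem ha he hshift b hb hb0⟩

end FurstenbergCriteria

def denCoprimeSubring (n : ℕ) : Subring ℚ where
  carrier := {q | q.den.Coprime n}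
  mul_mem' {p q} hp hq := Nat.Coprime.coprime_dvd_left (Rat.mul_den_dvd p q) (hp.mul_left hq)
  one_mem' := Nat.coprime_one_left n
  add_mem' {p q} hp hq := Nat.Coprime.coprime_dvd_left (Rat.add_den_dvd p q) (hp.mul_left hq)
  zero_mem' := Nat.coprime_one_left n
  neg_mem' {q} hq := by simpa using hq

theorem mem_denCoprimeSubring {n : ℕ} {q : ℚ} : q ∈ denCoprimeSubring n ↔ q.den.Coprime n :=
  Iff.rfl

namespace NonFurstenbergExample

def offsets : Set ℚ := {0, 1 / 3, 2 / 5}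

theorem zero_mem_offsets : (0 : ℚ) ∈ offsets := Or.inl rfl

theorem mem_offsets_cases {s : ℚ} (hs : s ∈ offsets) :
    s = 0 ∨ 1 / 3 ≤ s ∧ s ≤ 2 / 5 := by
  rcases hs with rfl | rfl | rfl <;> norm_num

theorem nonneg_of_mem_offsets {s : ℚ} (hs : s ∈ offsets) : 0 ≤ s := by
  rcases mem_offsets_cases hs with rfl | ⟨h, -⟩ <;> linarith

def monoid : AddSubmonoid ℚ where
  carrier := {x | ∃ s ∈ offsets, s ≤ x ∧ x - s ∈ denCoprimeSubring 15} ∪ Set.Ioi (3 / 5)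
  zero_mem' := Or.inl ⟨0, zero_mem_offsets, le_rfl, by simp⟩
  add_mem' := by
    rintro x y (⟨s, hs, hsx, hxs⟩ | hx) (⟨t, ht, hty, hyt⟩ | hy)
    · rcases mem_offsets_cases hs with rfl | ⟨hs1, -⟩
      · refine Or.inl ⟨t, ht, by linarith, ?_⟩
        simpa [add_sub_assoc] using (denCoprimeSubring 15).add_mem hxs hyt
      rcases mem_offsets_cases ht with rfl | ⟨ht1, -⟩
      · refine Or.inl ⟨s, hs, by linarith, ?_⟩
        simpa [add_sub_right_comm] using (denCoprimeSubring 15).add_mem hxs hyt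
      · exact Or.inr (by change 3 / 5 < x + y; linarith)
    · exact Or.inr (by change 3 / 5 < x + y; linarith [nonneg_of_mem_offsets hs, hy.out])
    · exact Or.inr (by change 3 / 5 < x + y; linarith [nonneg_of_mem_offsets ht, hx.out])
    · exact Or.inr (by change 3 / 5 < x + y; linarith [hx.out, hy.out])

theorem mem_monoid {x : ℚ} :
    x ∈ monoid ↔
      (∃ s ∈ offsets, s ≤ x ∧ x - s ∈ denCoprimeSubring 15) ∨ 3 / 5 < x :=
  Iff.rfl

theorem nonneg_of_mem_monoid {x : ℚ} (hx : x ∈ monoid) : 0 ≤ x := by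
  rcases hx with ⟨s, hs, hsx, -⟩ | hx
  · linarith [nonneg_of_mem_offsets hs]
  · exact le_of_lt (lt_trans (by norm_num) hx)

theorem isAtomIn_of_mem_offsets {a : ℚ} (ha : a ∈ offsets) (ha0 : a ≠ 0)
    (h : ∀ s ∈ offsets, s < a → a - s ∉ denCoprimeSubring 15) : IsAtomIn monoid a := by
  have ha_le : a ≤ 2 / 5 := ((mem_offsets_cases ha).resolve_left ha0).2
  refine ⟨Or.inl ⟨a, ha, le_rfl, by simp⟩, ha0, fun x hx y hy hxy => ?_⟩
  by_contra! hxy0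
  have hx_pos : 0 < x := (nonneg_of_mem_monoid hx).lt_of_ne' hxy0.1
  have hy_pos : 0 < y := (nonneg_of_mem_monoid hy).lt_of_ne' hxy0.2
  obtain ⟨s, hs, hsx, hxs⟩ := (mem_monoid.1 hx).resolve_right (by linarith)
  obtain ⟨t, ht, hty, hyt⟩ := (mem_monoid.1 hy).resolve_right (by linarith)
  rcases mem_offsets_cases hs with rfl | ⟨hs1, -⟩
  · refine h t ht (by linarith) ?_
    simpa [hxy, add_sub_assoc] using (denCoprimeSubring 15).add_mem hxs hyt
  rcases mem_offsets_cases ht with rfl | ⟨ht1, -⟩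
  · refine h s hs (by linarith) ?_
    simpa [hxy, add_sub_right_comm] using (denCoprimeSubring 15).add_mem hxs hyt
  · linarith

theorem isAtomIn_one_third : IsAtomIn monoid (1 / 3) := by
  refine isAtomIn_of_mem_offsets (by simp [offsets]) (by norm_num) ?_
  rintro s (rfl | rfl | rfl) <;> norm_num [mem_denCoprimeSubring]

theorem isAtomIn_two_fifths : IsAtomIn monoid (2 / 5) := by
  refine isAtomIn_of_mem_offsets (by simp [offsets]) (by norm_num) ?_
  rintro s (rfl | rfl | rfl) <;> norm_num [mem_denCoprimeSubring]

theorem one_third_le_of_isAtomIn {a : ℚ} (ha : IsAtomIn monoid a) : 1 / 3 ≤ a := by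
  obtain ⟨ha_mem, ha0, ha_atom⟩ := ha
  rcases mem_monoid.1 ha_mem with ⟨s, hs, hsa, has⟩ | ha_gt
  · rcases mem_offsets_cases hs with rfl | ⟨hs1, -⟩
    · have ha_half : a / 2 ∈ monoid := by
        refine Or.inl ⟨0, zero_mem_offsets, by linarith, ?_⟩
        have h_inv_two : (2⁻¹ : ℚ) ∈ denCoprimeSubring 15 := by norm_num [mem_denCoprimeSubring]
        rw [sub_zero] at has ⊢
        exact (denCoprimeSubring 15).mul_mem has h_inv_two
      rcases ha_atom _ ha_half _ ha_half (by ring) with h | h <;> exact absurd (by linarith) ha0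
    · exact hs1.trans hsa
  · linarith

theorem three_fifths_not_mem : (3 / 5 : ℚ) ∉ monoid := by
  rintro (⟨s, hs, -, h⟩ | h)
  · rcases hs with rfl | rfl | rfl <;> norm_num [mem_denCoprimeSubring] at h
  · exact lt_irrefl _ h.out

theorem add_three_fifths_mem (b : ℚ) (hb : b ∈ monoid) (hb0 : b ≠ 0) : b + 3 / 5 ∈ monoid :=
  Or.inr (by change 3 / 5 < b + 3 / 5; linarith [(nonneg_of_mem_monoid hb).lt_of_ne' hb0])

theorem atomicIn_one : AtomicIn monoid 1 := by
  have h := AddSubmonoid.subset_closure (s := {a | IsAtomIn monoid a}) isAtomIn_one_third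
  rw [show (1 : ℚ) = 1 / 3 + (1 / 3 + 1 / 3) by norm_num]
  exact add_mem h (add_mem h h)

theorem not_furstenberg : ¬ Furstenberg monoid := by
  have h_quarter : (1 / 4 : ℚ) ∈ monoid :=
    Or.inl ⟨0, zero_mem_offsets, by norm_num, by norm_num [mem_denCoprimeSubring]⟩
  refine not_furstenberg_of_lt_isAtomIn (fun x => nonneg_of_mem_monoid) h_quarter (by norm_num)
    fun a ha => ?_
  linarith [one_third_le_of_isAtomIn ha]

end NonFurstenbergExample

/-- There is a Puiseux monoid that is both almost Furstenberg and nearly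
Furstenberg but not Furstenberg. -/
theorem stmt_11 :
    ∃ M : AddSubmonoid ℚ, (∀ x ∈ M, 0 ≤ x) ∧
      AlmostFurstenberg M ∧ NearlyFurstenberg M ∧ ¬ Furstenberg M := by
  open NonFurstenbergExample in
  refine ⟨monoid, fun x => nonneg_of_mem_monoid,
    almostFurstenberg_of_not_mem isAtomIn_two_fifths three_fifths_not_mem add_three_fifths_mem
      (by norm_num [atomicIn_one]),
    nearlyFurstenberg_of_not_mem isAtomIn_two_fifths three_fifths_not_mem add_three_fifths_mem,
    not_furstenberg⟩
end

section
/- Let p ≥ 7 be prime and let M_p be the Puiseux monoid generated by {1/p} ∪ (ℕ₀[1/2] \ {0}) ∪ (1/2 - 1/p + (ℕ₀[1/2] \ {0})). Then the set of atoms of M_p is exactly {1/p}. -/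
/-- The nonzero nonnegative dyadic rationals. -/
def Dy : Set ℚ := {q | ∃ b c : ℕ, 0 < b ∧ q = (b : ℚ)/2^c}

/-- The Puiseux monoid generated by
`{1/p} ∪ (ℕ₀[1/2]\{0}) ∪ (1/2 - 1/p + (ℕ₀[1/2]\{0}))`. -/
def Mp (p : ℕ) : AddSubmonoid ℚ :=
  AddSubmonoid.closure
    ({1/(p : ℚ)} ∪ Dy ∪ {x | ∃ d ∈ Dy, x = 1/2 - 1/(p : ℚ) + d})

def Pm (p : ℕ) (q : ℚ) : Prop :=
  ∃ m k : ℕ, ∃ e : ℚ, (∃ b c : ℕ, e = (b:ℚ)/2^c) ∧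
    q = ((m:ℚ) - (k:ℚ))/(p:ℚ) + (k:ℚ)/2 + e ∧ (k = 0 ∨ 0 < e)

lemma pm_of_mem (p : ℕ) {q : ℚ} (hq : q ∈ Mp p) : Pm p q := by
  induction hq using AddSubmonoid.closure_induction with
  | mem x hx =>
    rcases hx with ((hx | hx) | hx)
    · refine ⟨1, 0, 0, ⟨0, 0, by norm_num⟩, ?_, Or.inl rfl⟩
      simp only [Set.mem_singleton_iff] at hx; rw [hx]; push_cast; ring
    · rcases hx with ⟨b, c, hb, rfl⟩
      exact ⟨0, 0, (b:ℚ)/2^c, ⟨b, c, rfl⟩, by push_cast; ring, Or.inl rfl⟩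
    · rcases hx with ⟨d, ⟨b, c, hb, rfl⟩, rfl⟩
      refine ⟨0, 1, (b:ℚ)/2^c, ⟨b, c, rfl⟩, by push_cast; ring, Or.inr ?_⟩
      positivity
  | zero => exact ⟨0, 0, 0, ⟨0, 0, by norm_num⟩, by norm_num, Or.inl rfl⟩
  | add x y hx hy ihx ihy =>
    obtain ⟨m1, k1, e1, ⟨b1, c1, rfl⟩, hx1, hc1⟩ := ihx
    obtain ⟨m2, k2, e2, ⟨b2, c2, rfl⟩, hx2, hc2⟩ := ihy
    refine ⟨m1 + m2, k1 + k2, (b1:ℚ)/2^c1 + (b2:ℚ)/2^c2,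
      ⟨b1 * 2^c2 + b2 * 2^c1, c1 + c2, by
        rw [div_add_div _ _ (by positivity : (2:ℚ)^c1 ≠ 0) (by positivity : (2:ℚ)^c2 ≠ 0),
          ← pow_add]; push_cast; ring⟩,
      by rw [hx1, hx2]; push_cast; ring, ?_⟩
    rcases hc1 with h1 | h1
    · rcases hc2 with h2 | h2
      · exact Or.inl (by omega)
      · refine Or.inr (by positivity)
    · refine Or.inr ?_
      have : (0:ℚ) ≤ (b2:ℚ)/2^c2 := by positivity
      linarith

lemma one_div_p_mem (p : ℕ) : (1:ℚ)/(p:ℚ) ∈ Mp p :=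
  AddSubmonoid.subset_closure (by left; left; rfl)

lemma dy_mem (p : ℕ) {d : ℚ} (hd : d ∈ Dy) : d ∈ Mp p :=
  AddSubmonoid.subset_closure (by left; right; exact hd)

lemma third_mem (p : ℕ) {d : ℚ} (hd : d ∈ Dy) : 1/2 - 1/(p:ℚ) + d ∈ Mp p :=
  AddSubmonoid.subset_closure (by right; exact ⟨d, hd, rfl⟩)

lemma mem_of_pm (p : ℕ) (hp0 : (p:ℚ) ≠ 0) {q : ℚ} (hq : Pm p q) : q ∈ Mp p := by
  obtain ⟨m, k, e, ⟨b, c, rfl⟩, hq, hcond⟩ := hq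
  rcases Nat.eq_zero_or_pos k with hk | hk
  · subst hk
    have : q = m • (1/(p:ℚ)) + b • ((1:ℚ)/2^c) := by
      rw [hq, nsmul_eq_mul, nsmul_eq_mul]; push_cast; ring
    rw [this]
    exact add_mem (nsmul_mem (one_div_p_mem p) m)
      (nsmul_mem (dy_mem p ⟨1, c, one_pos, by norm_num⟩) b)
  · have he : 0 < (b:ℚ)/2^c := hcond.resolve_left (by omega)
    have hb : 0 < b := by
      by_contra hb
      rw [Nat.eq_zero_of_not_pos hb] at he; norm_num at he
    have hklt : k ≤ 2^k := Nat.le_of_lt (Nat.lt_two_pow_self (n := k))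
    have : q = m • (1/(p:ℚ)) + (b * (2^k - k)) • ((1:ℚ)/2^(c+k))
        + k • (1/2 - 1/(p:ℚ) + (b:ℚ)/2^(c+k)) := by
      rw [hq, nsmul_eq_mul, nsmul_eq_mul, nsmul_eq_mul]
      push_cast [Nat.cast_sub hklt]
      have h2 : ((2:ℚ))^(c+k) ≠ 0 := by positivity
      field_simp
      ring
    rw [this]
    refine add_mem (add_mem ?_ ?_) ?_
    · exact nsmul_mem (one_div_p_mem p) m
    · exact nsmul_mem (dy_mem p ⟨1, c+k, one_pos, by norm_num⟩) _
    · exact nsmul_mem (third_mem p ⟨b, c+k, hb, rfl⟩) k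

lemma mem_Mp_nonneg {p : ℕ} (hp : 2 ≤ p) {q : ℚ} (hq : q ∈ Mp p) : 0 ≤ q := by
  have hp2 : (1:ℚ)/(p:ℚ) ≤ 1/2 := by
    apply one_div_le_one_div_of_le (by norm_num)
    exact_mod_cast hp
  induction hq using AddSubmonoid.closure_induction with
  | mem x hx =>
    rcases hx with ((hx | hx) | hx)
    · simp only [Set.mem_singleton_iff] at hx
      rw [hx]; positivity
    · rcases hx with ⟨b, c, hb, rfl⟩; positivity
    · rcases hx with ⟨d, ⟨b, c, hb, rfl⟩, rfl⟩
      have : (0:ℚ) ≤ (b:ℚ)/2^c := by positivity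
      linarith
  | zero => exact le_refl 0
  | add x y hx hy ihx ihy => linarith

lemma k_bound {p m k : ℕ} (hp7 : (7:ℚ) ≤ (p:ℚ)) (hk : k ≠ 0) :
    (5:ℚ)/14 ≤ ((m:ℚ) - (k:ℚ))/(p:ℚ) + (k:ℚ)/2 := by
  have hppos : (0:ℚ) < p := by linarith
  have hk1 : (1:ℚ) ≤ k := by exact_mod_cast Nat.one_le_iff_ne_zero.mpr hk
  have hm : (0:ℚ) ≤ m := Nat.cast_nonneg m
  have h1 : (-(k:ℚ))/(p:ℚ) ≤ ((m:ℚ) - k)/p :=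
    (div_le_div_iff_of_pos_right hppos).mpr (by linarith)
  have h2 : (k:ℚ)/(p:ℚ) ≤ (k:ℚ)/7 :=
    div_le_div_of_nonneg_left (by linarith) (by norm_num) hp7
  have h3 : (-(k:ℚ))/(p:ℚ) = -((k:ℚ)/(p:ℚ)) := by ring
  nlinarith

/-- For a prime `p ≥ 7`, the set of atoms of `Mp p` is exactly `{1/p}`. -/
theorem stmt_12 (p : ℕ) (hp : p.Prime) (h7 : 7 ≤ p) :
    {a | IsAtomIn (Mp p) a} = {(1/(p : ℚ))} := by
  have hp7 : (7:ℚ) ≤ (p:ℚ) := by exact_mod_cast h7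
  have hppos : (0:ℚ) < p := by linarith
  have hp0 : (p:ℚ) ≠ 0 := ne_of_gt hppos
  have hp2 : 2 ≤ p := by omega
  have h1p7 : (1:ℚ)/(p:ℚ) ≤ 1/7 :=
    div_le_div_of_nonneg_left (by norm_num) (by norm_num) hp7
  ext a
  simp only [Set.mem_setOf_eq, Set.mem_singleton_iff]
  constructor
  · rintro ⟨haM, ha0, hsplit⟩
    obtain ⟨m, k, e, ⟨b, c, rfl⟩, heq, hcond⟩ := pm_of_mem p haM
    -- step 1: k = 0
    have hk : k = 0 := by
      by_contra hk
      have he : 0 < (b:ℚ)/2^c := hcond.resolve_left hk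
      have hb : 0 < b := by
        rcases Nat.eq_zero_or_pos b with h | h
        · rw [h] at he; norm_num at he
        · exact h
      set x : ℚ := (b:ℚ)/2^(c+1) with hxdef
      have hxpos : 0 < x := by positivity
      have hxM : x ∈ Mp p := dy_mem p ⟨b, c+1, hb, rfl⟩
      have haxval : a - x = ((m:ℚ) - k)/p + (k:ℚ)/2 + (b:ℚ)/2^(c+1) := by
        rw [heq, hxdef, pow_succ]; ring
      have haxM : a - x ∈ Mp p :=
        mem_of_pm p hp0 ⟨m, k, (b:ℚ)/2^(c+1), ⟨b, c+1, rfl⟩, haxval,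
          Or.inr (by positivity)⟩
      rcases hsplit x hxM (a - x) haxM (by ring) with h | h
      · exact absurd h (ne_of_gt hxpos)
      · have : (5:ℚ)/14 ≤ ((m:ℚ) - k)/p + (k:ℚ)/2 := k_bound hp7 hk
        have hbx : (0:ℚ) < (b:ℚ)/2^(c+1) := by positivity
        rw [haxval] at h
        nlinarith
    subst hk
    simp only [Nat.cast_zero, sub_zero, zero_div, add_zero] at heq
    -- step 2: b = 0
    have hb : b = 0 := by
      by_contra hb
      have hbpos : 0 < b := Nat.pos_of_ne_zero hb
      set x : ℚ := (b:ℚ)/2^(c+1) with hxdef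
      have hxpos : 0 < x := by positivity
      have hxM : x ∈ Mp p := dy_mem p ⟨b, c+1, hbpos, rfl⟩
      have haxval : a - x = ((m:ℚ) - (0:ℕ))/p + ((0:ℕ):ℚ)/2 + (b:ℚ)/2^(c+1) := by
        rw [heq, hxdef, pow_succ]; push_cast; ring
      have haxM : a - x ∈ Mp p :=
        mem_of_pm p hp0 ⟨m, 0, (b:ℚ)/2^(c+1), ⟨b, c+1, rfl⟩, haxval, Or.inl rfl⟩
      rcases hsplit x hxM (a - x) haxM (by ring) with h | h
      · exact absurd h (ne_of_gt hxpos)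
      · have hm0 : (0:ℚ) ≤ (m:ℚ)/p := by positivity
        have hbx : (0:ℚ) < (b:ℚ)/2^(c+1) := by positivity
        rw [haxval] at h
        push_cast at h
        norm_num at h
        linarith
    subst hb
    simp only [Nat.cast_zero, zero_div, add_zero] at heq
    -- step 3: m = 1
    rcases Nat.lt_or_ge m 2 with hm2 | hm2
    · interval_cases m
      · rw [heq] at ha0; norm_num at ha0
      · rw [heq]; norm_num
    · exfalso
      have h1M : (1:ℚ)/(p:ℚ) ∈ Mp p := one_div_p_mem p
      have hrest : ((m - 1 : ℕ):ℚ)/(p:ℚ) ∈ Mp p :=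
        mem_of_pm p hp0 ⟨m - 1, 0, 0, ⟨0, 0, by norm_num⟩, by push_cast; ring,
          Or.inl rfl⟩
      have hsum : a = 1/(p:ℚ) + ((m - 1 : ℕ):ℚ)/(p:ℚ) := by
        rw [heq]; push_cast [Nat.cast_sub (by omega : 1 ≤ m)]; field_simp; ring
      rcases hsplit _ h1M _ hrest hsum with h | h
      · rw [div_eq_zero_iff] at h; rcases h with h | h
        · norm_num at h
        · exact hp0 h
      · rw [div_eq_zero_iff] at h; rcases h with h | h
        · have : ((m - 1 : ℕ):ℚ) ≠ 0 := by
            have : m - 1 ≠ 0 := by omega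
            exact_mod_cast this
          exact this h
        · exact hp0 h
  · rintro rfl
    refine ⟨one_div_p_mem p, one_div_ne_zero hp0, ?_⟩
    intro x hx y hy hxy
    obtain ⟨m1, k1, e1, ⟨b1, c1, rfl⟩, hx1, hc1⟩ := pm_of_mem p hx
    obtain ⟨m2, k2, e2, ⟨b2, c2, rfl⟩, hx2, hc2⟩ := pm_of_mem p hy
    have hxnn : 0 ≤ x := mem_Mp_nonneg hp2 hx
    have hynn : 0 ≤ y := mem_Mp_nonneg hp2 hy
    have hxle : x ≤ 1/(p:ℚ) := by linarith
    have hyle : y ≤ 1/(p:ℚ) := by linarith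
    have hb1nn : (0:ℚ) ≤ (b1:ℚ)/2^c1 := by positivity
    have hb2nn : (0:ℚ) ≤ (b2:ℚ)/2^c2 := by positivity
    have hk1 : k1 = 0 := by
      by_contra hk
      have := k_bound (m := m1) hp7 hk
      nlinarith [hx1]
    have hk2 : k2 = 0 := by
      by_contra hk
      have := k_bound (m := m2) hp7 hk
      nlinarith [hx2]
    subst hk1; subst hk2
    simp only [Nat.cast_zero, sub_zero, zero_div, add_zero] at hx1 hx2
    -- 1/p = (m1+m2)/p + E
    have hsum : 1/(p:ℚ) = ((m1:ℚ) + m2)/p + ((b1:ℚ)/2^c1 + (b2:ℚ)/2^c2) := by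
      rw [hxy, hx1, hx2]; ring
    have hmle : ((m1:ℚ) + m2) ≤ 1 := by
      have h1 : ((m1:ℚ) + m2)/p ≤ 1/p := by linarith
      have := (div_le_div_iff_of_pos_right hppos).mp h1
      linarith
    have hmle' : m1 + m2 ≤ 1 := by exact_mod_cast hmle
    rcases Nat.le_one_iff_eq_zero_or_eq_one.mp hmle' with hm | hm
    · exfalso
      have hm1 : m1 = 0 := by omega
      have hm2 : m2 = 0 := by omega
      subst hm1; subst hm2
      simp only [Nat.cast_zero, zero_add, zero_div] at hsum
      have h2c1 : ((2:ℚ))^c1 ≠ 0 := by positivity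
      have h2c2 : ((2:ℚ))^c2 ≠ 0 := by positivity
      have key : (2:ℚ)^(c1+c2) = (p:ℚ) * ((b1:ℚ)*2^c2 + (b2:ℚ)*2^c1) := by
        rw [pow_add]
        field_simp at hsum
        linarith
      have keyN : 2^(c1+c2) = p * (b1*2^c2 + b2*2^c1) := by exact_mod_cast key
      have hdvd : p ∣ 2^(c1+c2) := Dvd.intro _ keyN.symm
      have := hp.dvd_of_dvd_pow hdvd
      have := Nat.le_of_dvd (by norm_num) this
      omega
    · -- m1 + m2 = 1, so E = 0
      have hmq : ((m1:ℚ) + m2) = 1 := by exact_mod_cast hm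
      have hE : (b1:ℚ)/2^c1 + (b2:ℚ)/2^c2 = 0 := by
        rw [hmq] at hsum; linarith
      have he1 : (b1:ℚ)/2^c1 = 0 := by linarith
      have he2 : (b2:ℚ)/2^c2 = 0 := by linarith
      rcases Nat.eq_zero_or_pos m1 with hm1 | hm1
      · left; rw [hx1, he1, hm1]; norm_num
      · right
        have hm2 : m2 = 0 := by omega
        rw [hx2, he2, hm2]; norm_num
end

section
/- Let p ≥ 7 be prime and let M_p be the Puiseux monoid generated by {1/p} ∪ (ℕ₀[1/2] \ {0}) ∪ (1/2 - 1/p + (ℕ₀[1/2] \ {0})). Then 1/p does not divide 1/2 in M_p; that is, 1/2 - 1/p ∉ M_p. -/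
lemma mem_Mp_struct (p : ℕ) (x : ℚ) (hx : x ∈ Mp p) :
    ∃ a k b c : ℕ, (0 < k → 0 < b) ∧
      x = a/p + k*(1/2 - 1/(p:ℚ)) + b/2^c := by
  induction hx using AddSubmonoid.closure_induction with
  | mem y hy =>
    rcases hy with (hy | hy) | hy
    · refine ⟨1, 0, 0, 0, by simp, ?_⟩
      simp at hy; simp [hy]
    · obtain ⟨b, c, hb, rfl⟩ := hy
      exact ⟨0, 0, b, c, by simp, by push_cast; ring⟩
    · obtain ⟨d, ⟨b, c, hb, rfl⟩, rfl⟩ := hy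
      exact ⟨0, 1, b, c, fun _ => hb, by push_cast; ring⟩
  | zero => exact ⟨0, 0, 0, 0, by simp, by simp⟩
  | add x y hx hy ihx ihy =>
    obtain ⟨a1, k1, b1, c1, h1, rfl⟩ := ihx
    obtain ⟨a2, k2, b2, c2, h2, rfl⟩ := ihy
    refine ⟨a1 + a2, k1 + k2, b1 * 2^c2 + b2 * 2^c1, c1 + c2, ?_, ?_⟩
    · intro hk
      rcases Nat.eq_zero_or_pos k1 with h | h
      · have : 0 < k2 := by omega
        have := h2 this; positivity
      · have := h1 h; positivity
    · push_cast
      field_simp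
      ring

/-- For a prime `p ≥ 7`, `1/p` does not divide `1/2` in `Mp p`. -/
theorem stmt_13 (p : ℕ) (hp : p.Prime) (h7 : 7 ≤ p) :
    (1/2 - 1/(p : ℚ)) ∉ Mp p := by
  intro hmem
  obtain ⟨a, k, b, c, hkb, heq⟩ := mem_Mp_struct p _ hmem
  have hp7 : (7:ℚ) ≤ (p:ℚ) := by exact_mod_cast h7
  have hp0 : (p:ℚ) ≠ 0 := by positivity
  have h2c : (2:ℚ)^c ≠ 0 := by positivity
  rcases Nat.eq_zero_or_pos k with hk | hk
  · -- k = 0 : 1/2 - 1/p = a/p + b/2^c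
    subst hk
    simp only [Nat.cast_zero, zero_mul, add_zero] at heq
    -- integer equation: 2^c * p = 2^(c+1)*a + 2*p*b + 2^(c+1)
    have hz : (2:ℤ)^c * p = 2^(c+1) * a + 2 * p * b + 2^(c+1) := by
      have : ((2:ℤ)^c * p : ℤ) = ((2^(c+1) * a + 2 * p * b + 2^(c+1) : ℤ)) := by
        have h2 : ((2:ℚ)^c * p : ℚ) = ((2:ℚ)^(c+1) * a + 2 * p * b + 2^(c+1)) := by
          have hmul : (p:ℚ) * ((2:ℚ)^c * p) = p * ((2:ℚ)^(c+1)*a + 2*p*b + 2^(c+1)) := by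
            field_simp at heq
            ring_nf at heq ⊢
            linear_combination (p:ℚ) * heq
          exact mul_left_cancel₀ hp0 hmul
        exact_mod_cast h2
      exact this
    have hpdvd : (p:ℤ) ∣ 2^(c+1) * (a + 1) := by
      have : (p:ℤ) ∣ 2^(c+1) * a + 2^(c+1) := ⟨2^c - 2*b, by linarith⟩
      convert this using 1; ring
    have hp2 : ¬ (p:ℤ) ∣ 2 := by
      intro h
      have := Int.le_of_dvd (by norm_num) h
      omega
    have hpa : (p:ℤ) ∣ (a + 1) := by
      have hpz : Prime (p:ℤ) := Nat.prime_iff_prime_int.mp hp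
      rcases hpz.dvd_mul.mp hpdvd with h | h
      · exact absurd (hpz.dvd_of_dvd_pow h) hp2
      · exact h
    have hap : (p:ℤ) ≤ a + 1 := Int.le_of_dvd (by positivity) hpa
    have hapQ : (p:ℚ) ≤ (a:ℚ) + 1 := by exact_mod_cast hap
    have hb0 : (0:ℚ) ≤ (b:ℚ)/2^c := by positivity
    have h1 : ((a:ℚ)+1)/p ≥ 1 := by
      rw [ge_iff_le, le_div_iff₀ (by linarith)]
      linarith
    have : (1:ℚ)/2 - 1/p < a/p + b/2^c := by
      have : (a:ℚ)/p = ((a:ℚ)+1)/p - 1/p := by ring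
      rw [this]
      have : (1:ℚ)/2 < ((a:ℚ)+1)/p + b/2^c := by linarith
      linarith
    linarith [heq]
  · -- k ≥ 1 : RHS too big
    have hb : 0 < b := hkb hk
    have hbQ : (0:ℚ) < (b:ℚ)/2^c := by positivity
    have hkQ : (1:ℚ) ≤ (k:ℚ) := by exact_mod_cast hk
    have haQ : (0:ℚ) ≤ (a:ℚ)/p := by positivity
    have hhalf : (0:ℚ) < 1/2 - 1/p := by
      rw [sub_pos, div_lt_div_iff₀ (by linarith) (by norm_num)]
      linarith
    nlinarith [heq, mul_le_mul_of_nonneg_right hkQ hhalf.le]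
end

section
/- There exists a Puiseux monoid that is almost Furstenberg but not nearly Furstenberg. -/
namespace S15

open AddSubmonoid Finset

noncomputable def q : ℕ → ℕ
  | 0 => (Nat.exists_infinite_primes (2 * 4 ^ 0 + 2)).choose
  | (n+1) => (Nat.exists_infinite_primes (max (q n + 1) (2 * 4 ^ (n+1) + 2))).choose

lemma q_prime (n : ℕ) : (q n).Prime := by
  cases n with
  | zero => exact (Nat.exists_infinite_primes (2 * 4 ^ 0 + 2)).choose_spec.2
  | succ m => exact (Nat.exists_infinite_primes (max (q m + 1) (2 * 4 ^ (m+1) + 2))).choose_spec.2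

lemma q_big (n : ℕ) : 2 * 4 ^ n + 1 < q n := by
  cases n with
  | zero =>
    have h := (Nat.exists_infinite_primes (2 * 4 ^ 0 + 2)).choose_spec.1
    simp only [q]
    omega
  | succ m =>
    have h := (Nat.exists_infinite_primes (max (q m + 1) (2 * 4 ^ (m+1) + 2))).choose_spec.1
    have h2 : 2 * 4 ^ (m+1) + 2 ≤ (Nat.exists_infinite_primes (max (q m + 1) (2 * 4 ^ (m+1) + 2))).choose :=
      le_trans (le_max_right _ _) h
    simp only [q]
    omega

lemma q_lt_succ (n : ℕ) : q n < q (n + 1) := by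
  have h := (Nat.exists_infinite_primes (max (q n + 1) (2 * 4 ^ (n+1) + 2))).choose_spec.1
  have h2 : q n + 1 ≤ (Nat.exists_infinite_primes (max (q n + 1) (2 * 4 ^ (n+1) + 2))).choose :=
    le_trans (le_max_left _ _) h
  simp only [q]
  omega

lemma q_strictMono : StrictMono q := strictMono_nat_of_lt_succ q_lt_succ

lemma q_pos (n : ℕ) : 0 < q n := (q_prime n).pos

lemma four_pow_ge_one (n : ℕ) : 1 ≤ 4 ^ n := Nat.one_le_pow _ _ (by norm_num)

lemma q_ne_two (n : ℕ) : q n ≠ 2 := by have := q_big n; have := four_pow_ge_one n; omega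

lemma q_not_dvd_two_pow (n m : ℕ) : ¬ q n ∣ 2 ^ m := by
  intro h
  have h2 := (Nat.Prime.dvd_of_dvd_pow (q_prime n)) h
  have := (Nat.prime_dvd_prime_iff_eq (q_prime n) Nat.prime_two).1 h2
  exact q_ne_two n this

noncomputable def a (n : ℕ) : ℚ := (2 * 4 ^ n + 1) / (4 ^ n * q n)

noncomputable def t (n : ℕ) : ℚ := (2 * 4 ^ n + 1) / 4 ^ n

lemma four_pow_pos (n : ℕ) : (0:ℚ) < 4 ^ n := by positivity

lemma qQ_pos (n : ℕ) : (0:ℚ) < (q n : ℚ) := by exact_mod_cast q_pos n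

lemma a_pos (n : ℕ) : 0 < a n := by
  unfold a; have := qQ_pos n; positivity

lemma t_pos (n : ℕ) : 0 < t n := by unfold t; positivity

lemma q_mul_a (n : ℕ) : (q n : ℚ) * a n = t n := by
  unfold a t
  have hq := qQ_pos n
  have h4 := four_pow_pos n
  field_simp

lemma t_eq (n : ℕ) : t n = 2 + 1 / 4 ^ n := by
  unfold t; field_simp

lemma two_lt_t (n : ℕ) : 2 < t n := by
  rw [t_eq]; have := four_pow_pos n
  have : (0:ℚ) < 1/4^n := by positivity
  linarith

lemma t_le_three (n : ℕ) : t n ≤ 3 := by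
  rw [t_eq]
  have h : (1:ℚ) ≤ 4 ^ n := one_le_pow₀ (by norm_num)
  have : (1:ℚ)/4^n ≤ 1 := by
    rw [div_le_one (four_pow_pos n)]; exact h
  linarith

lemma t_anti (n : ℕ) : t (n+1) < t n := by
  rw [t_eq, t_eq]
  have h1 : (0:ℚ) < 4 ^ n := four_pow_pos n
  have h2 : (0:ℚ) < 4 ^ (n+1) := four_pow_pos (n+1)
  have h3 : (4:ℚ)^n < 4^(n+1) := by
    apply pow_lt_pow_right₀ (by norm_num) (by omega)
  have : (1:ℚ)/4^(n+1) < 1/4^n := by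
    exact div_lt_div_of_pos_left one_pos h1 h3
  linarith


/-! ### The dyadic part `3·ℤ[1/2]≥0` -/

def DyGens : Set ℚ := {x | ∃ m : ℕ, x = 3 / 2 ^ m}

noncomputable def AGens : Set ℚ := {x | ∃ n : ℕ, x = a n}

noncomputable def Mm : AddSubmonoid ℚ := AddSubmonoid.closure (DyGens ∪ AGens)

def ThreeDy : AddSubmonoid ℚ := AddSubmonoid.closure DyGens

lemma threeDy_le_Mm : ThreeDy ≤ Mm := AddSubmonoid.closure_mono Set.subset_union_left

lemma dyGen_mem (m : ℕ) : (3:ℚ)/2^m ∈ ThreeDy := AddSubmonoid.subset_closure ⟨m, rfl⟩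

lemma a_mem_Mm (n : ℕ) : a n ∈ Mm := AddSubmonoid.subset_closure (Or.inr ⟨n, rfl⟩)

lemma threeDy_form {x : ℚ} (hx : x ∈ ThreeDy) : ∃ (k m : ℕ), x = 3 * k / 2 ^ m := by
  induction hx using AddSubmonoid.closure_induction with
  | mem x hx => obtain ⟨m, rfl⟩ := hx; exact ⟨1, m, by norm_num⟩
  | zero => exact ⟨0, 0, by norm_num⟩
  | add x y hx hy ihx ihy =>
    obtain ⟨k, m, rfl⟩ := ihx
    obtain ⟨k', m', rfl⟩ := ihy
    refine ⟨k * 2 ^ m' + k' * 2 ^ m, m + m', ?_⟩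
    have h1 : (2:ℚ)^m ≠ 0 := by positivity
    have h2 : (2:ℚ)^m' ≠ 0 := by positivity
    field_simp
    push_cast
    ring

lemma threeDy_of_form (k m : ℕ) : (3 * k / 2 ^ m : ℚ) ∈ ThreeDy := by
  have : (3 * k / 2 ^ m : ℚ) = k • ((3:ℚ)/2^m) := by
    rw [nsmul_eq_mul]; ring
  rw [this]
  exact ThreeDy.nsmul_mem (dyGen_mem m) k

lemma threeDy_nonneg {x : ℚ} (hx : x ∈ ThreeDy) : 0 ≤ x := by
  obtain ⟨k, m, rfl⟩ := threeDy_form hx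
  positivity

lemma threeDy_sub {x y : ℚ} (hx : x ∈ ThreeDy) (hy : y ∈ ThreeDy) (h : y ≤ x) :
    x - y ∈ ThreeDy := by
  obtain ⟨k, m, rfl⟩ := threeDy_form hx
  obtain ⟨k', m', rfl⟩ := threeDy_form hy
  have h1 : (0:ℚ) < 2^m := by positivity
  have h2 : (0:ℚ) < 2^m' := by positivity
  have hq : (k':ℚ) * 2 ^ m ≤ (k:ℚ) * 2 ^ m' := by
    rw [div_le_div_iff₀ h2 h1] at h
    nlinarith
  have hn : k' * 2 ^ m ≤ k * 2 ^ m' := by exact_mod_cast hq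
  have heq : 3 * (k:ℚ) / 2 ^ m - 3 * (k':ℚ) / 2 ^ m' = 3 * ((k * 2 ^ m' - k' * 2 ^ m : ℕ) : ℚ) / 2 ^ (m + m') := by
    rw [Nat.cast_sub hn]
    push_cast
    field_simp
    ring
  rw [heq]
  exact threeDy_of_form _ _

lemma two_not_mem_threeDy : (2:ℚ) ∉ ThreeDy := by
  intro h
  obtain ⟨k, m, hk⟩ := threeDy_form h
  have h1 : (0:ℚ) < 2^m := by positivity
  have : (2:ℚ) * 2^m = 3 * k := by
    field_simp at hk
    linarith [hk]
  have h2 : 2 * 2^m = 3 * k := by exact_mod_cast this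
  have h3 : (3:ℕ) ∣ 2 * 2^m := ⟨k, h2⟩
  have h4 : (3:ℕ) ∣ 2^(m+1) := by rw [pow_succ]; ring_nf; ring_nf at h3; exact h3
  have h5 := Nat.Prime.dvd_of_dvd_pow Nat.prime_three h4
  omega

lemma t_mem_threeDy (n : ℕ) : t n ∈ ThreeDy := by
  obtain ⟨T, hT⟩ : ∃ T : ℕ, 2 * 4 ^ n + 1 = 3 * T := by
    induction n with
    | zero => exact ⟨1, rfl⟩
    | succ m ih => obtain ⟨T, hT⟩ := ih; exact ⟨4 * T - 1, by omega⟩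
  have : t n = 3 * T / 2 ^ (2 * n) := by
    unfold t
    have : ((2 * 4 ^ n + 1 : ℕ) : ℚ) = 3 * T := by exact_mod_cast hT
    push_cast at this ⊢
    rw [← this]
    congr 1
    rw [pow_mul]
    norm_num
  rw [this]
  exact threeDy_of_form T (2*n)


/-! ### Rationals with denominator coprime to `q n` -/

def Rcop (n : ℕ) : AddSubgroup ℚ where
  carrier := {x | ∃ A B : ℤ, B ≠ 0 ∧ ¬ (q n:ℤ) ∣ B ∧ x = A / B}
  zero_mem' := by
    refine ⟨0, 1, one_ne_zero, ?_, by norm_num⟩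
    intro h
    have h2 : (q n : ℤ) ≤ 1 := Int.le_of_dvd one_pos h
    have := q_big n
    have := four_pow_ge_one n
    omega
  add_mem' := by
    rintro x y ⟨A, B, hB, hpB, rfl⟩ ⟨C, D, hD, hpD, rfl⟩
    refine ⟨A * D + C * B, B * D, mul_ne_zero hB hD, ?_, ?_⟩
    · intro h
      have hprime : Prime (q n : ℤ) := Nat.prime_iff_prime_int.mp (q_prime n)
      rcases hprime.dvd_mul.mp h with h' | h'
      · exact hpB h'
      · exact hpD h'
    · push_cast
      field_simp
  neg_mem' := by
    rintro x ⟨A, B, hB, hpB, rfl⟩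
    exact ⟨-A, B, hB, hpB, by push_cast; ring⟩

lemma qZ_ne_zero (n : ℕ) : (q n : ℤ) ≠ 0 := by
  have := q_pos n; exact_mod_cast this.ne'

lemma qZ_not_dvd_two_pow (n m : ℕ) : ¬ (q n : ℤ) ∣ (2:ℤ) ^ m := by
  intro h
  have : (q n : ℤ) ∣ ((2^m : ℕ) : ℤ) := by push_cast; exact h
  exact q_not_dvd_two_pow n m (Int.ofNat_dvd.mp this)

lemma threeDy_mem_Rcop {x : ℚ} (hx : x ∈ ThreeDy) (n : ℕ) : x ∈ Rcop n := by
  obtain ⟨k, m, rfl⟩ := threeDy_form hx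
  exact ⟨3 * k, 2 ^ m, by positivity, qZ_not_dvd_two_pow n m, by push_cast; ring⟩

lemma qZ_not_dvd_num (n : ℕ) : ¬ (q n : ℤ) ∣ (2 * 4 ^ n + 1 : ℤ) := by
  intro h
  have h2 : (q n : ℤ) ∣ ((2 * 4 ^ n + 1 : ℕ) : ℤ) := by push_cast; convert h using 2
  have h3 := Int.ofNat_dvd.mp h2
  have h4 := Nat.le_of_dvd (by positivity) h3
  have := q_big n
  omega

lemma a_mem_Rcop {j n : ℕ} (hjn : j ≠ n) : a j ∈ Rcop n := by
  refine ⟨2 * 4 ^ j + 1, 4 ^ j * q j, ?_, ?_, ?_⟩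
  · have := q_pos j; positivity
  · intro h
    have hprime : Prime (q n : ℤ) := Nat.prime_iff_prime_int.mp (q_prime n)
    rcases hprime.dvd_mul.mp h with h' | h'
    · have : (4:ℤ)^j = 2^(2*j) := by rw [pow_mul]; norm_num
      rw [this] at h'
      exact qZ_not_dvd_two_pow n (2*j) h'
    · have h2 : (q n : ℤ) ∣ ((q j : ℕ) : ℤ) := h'
      have h3 := Int.ofNat_dvd.mp h2
      have := (Nat.prime_dvd_prime_iff_eq (q_prime n) (q_prime j)).mp h3
      exact hjn (q_strictMono.injective this.symm)
  · unfold a; push_cast; ring_nf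

lemma intMul_mem_Rcop {x : ℚ} {n : ℕ} (z : ℤ) (hx : x ∈ Rcop n) : (z:ℚ) * x ∈ Rcop n := by
  obtain ⟨A, B, hB, hpB, rfl⟩ := hx
  exact ⟨z * A, B, hB, hpB, by push_cast; ring⟩

lemma dvd_of_mul_a_mem {Z : ℤ} {n : ℕ} (h : (Z : ℚ) * a n ∈ Rcop n) : (q n : ℤ) ∣ Z := by
  obtain ⟨A, B, hB, hpB, heq⟩ := h
  have h4 : (4:ℚ)^n ≠ 0 := by positivity
  have hq : ((q n : ℚ)) ≠ 0 := (qQ_pos n).ne'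
  have hBQ : (B:ℚ) ≠ 0 := by exact_mod_cast hB
  have key : (Z:ℚ) * (2 * 4 ^ n + 1) * B = A * (4 ^ n * q n) := by
    unfold a at heq
    field_simp at heq
    linarith [heq]
  have keyZ : Z * (2 * 4 ^ n + 1) * B = A * (4 ^ n * q n) := by exact_mod_cast key
  have hdvd : (q n : ℤ) ∣ Z * (2 * 4 ^ n + 1) * B := ⟨A * 4 ^ n, by linarith [keyZ]⟩
  have hprime : Prime (q n : ℤ) := Nat.prime_iff_prime_int.mp (q_prime n)
  rcases hprime.dvd_mul.mp hdvd with h' | h'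
  · rcases hprime.dvd_mul.mp h' with h'' | h''
    · exact h''
    · exact absurd h'' (qZ_not_dvd_num n)
  · exact absurd h' hpB


/-! ### Representation and residue matching -/

lemma sum_extend {k : ℕ → ℕ} {N N' : ℕ} (h : ∀ j, N ≤ j → k j = 0) (hNN : N ≤ N') :
    ∑ j ∈ Finset.range N, (k j : ℚ) * a j = ∑ j ∈ Finset.range N', (k j : ℚ) * a j := by
  apply Finset.sum_subset (Finset.range_subset_range.2 hNN)
  intro j hj hnj
  rw [h j (by simp only [Finset.mem_range] at hnj; omega)]
  norm_num

lemma rep {x : ℚ} (hx : x ∈ Mm) :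
    ∃ (e : ℚ) (N : ℕ) (k : ℕ → ℕ), e ∈ ThreeDy ∧ (∀ j, N ≤ j → k j = 0) ∧
      x = e + ∑ j ∈ Finset.range N, (k j : ℚ) * a j := by
  induction hx using AddSubmonoid.closure_induction with
  | mem x hx =>
    rcases hx with hx | hx
    · obtain ⟨m, rfl⟩ := hx
      exact ⟨3/2^m, 0, fun _ => 0, dyGen_mem m, fun _ _ => rfl, by simp⟩
    · obtain ⟨n, rfl⟩ := hx
      refine ⟨0, n+1, fun j => if j = n then 1 else 0, AddSubmonoid.zero_mem _, ?_, ?_⟩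
      · intro j hj
        dsimp only
        rw [if_neg (by omega)]
      · have : ∀ j ∈ Finset.range (n+1),
            ((if j = n then (1:ℕ) else 0 : ℕ) : ℚ) * a j = if j = n then a n else 0 := by
          intro j _
          by_cases h : j = n
          · subst h; simp
          · simp [h]
        rw [Finset.sum_congr rfl this]
        simp
  | zero => exact ⟨0, 0, fun _ => 0, AddSubmonoid.zero_mem _, fun _ _ => rfl, by simp⟩
  | add x y hx hy ihx ihy =>
    obtain ⟨e₁, N₁, k₁, he₁, hz₁, rfl⟩ := ihx
    obtain ⟨e₂, N₂, k₂, he₂, hz₂, rfl⟩ := ihy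
    refine ⟨e₁ + e₂, max N₁ N₂, fun j => k₁ j + k₂ j, AddSubmonoid.add_mem _ he₁ he₂, ?_, ?_⟩
    · intro j hj
      dsimp only
      rw [hz₁ j (le_trans (le_max_left _ _) hj), hz₂ j (le_trans (le_max_right _ _) hj)]
    · rw [sum_extend hz₁ (le_max_left N₁ N₂), sum_extend hz₂ (le_max_right N₁ N₂)]
      have hs : ∑ j ∈ Finset.range (max N₁ N₂), ((k₁ j + k₂ j : ℕ) : ℚ) * a j
          = ∑ j ∈ Finset.range (max N₁ N₂), (k₁ j : ℚ) * a j
            + ∑ j ∈ Finset.range (max N₁ N₂), (k₂ j : ℚ) * a j := by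
        rw [← Finset.sum_add_distrib]
        apply Finset.sum_congr rfl
        intro j _
        push_cast
        ring
      dsimp only
      rw [hs]
      ring

lemma matching {e₁ e₂ : ℚ} {k₁ k₂ : ℕ → ℕ} {N : ℕ}
    (h₁ : e₁ ∈ ThreeDy) (h₂ : e₂ ∈ ThreeDy)
    (heq : e₁ + ∑ j ∈ Finset.range N, (k₁ j : ℚ) * a j
         = e₂ + ∑ j ∈ Finset.range N, (k₂ j : ℚ) * a j)
    {n : ℕ} (hn : n < N) : (q n : ℤ) ∣ (k₁ n : ℤ) - (k₂ n : ℤ) := by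
  have hsplit : ∀ k : ℕ → ℕ, ∑ j ∈ Finset.range N, (k j : ℚ) * a j
      = (k n : ℚ) * a n + ∑ j ∈ (Finset.range N).erase n, (k j : ℚ) * a j := by
    intro k
    rw [← Finset.add_sum_erase _ _ (Finset.mem_range.2 hn)]
  have h' := heq
  rw [hsplit k₁, hsplit k₂] at h'
  have key : (((k₁ n : ℤ) - (k₂ n : ℤ) : ℤ) : ℚ) * a n
      = (e₂ - e₁) + (∑ j ∈ (Finset.range N).erase n, (k₂ j : ℚ) * a j
          - ∑ j ∈ (Finset.range N).erase n, (k₁ j : ℚ) * a j) := by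
    push_cast
    linear_combination h'
  apply dvd_of_mul_a_mem (n := n)
  rw [key]
  apply AddSubgroup.add_mem
  · exact AddSubgroup.sub_mem _ (threeDy_mem_Rcop h₂ n) (threeDy_mem_Rcop h₁ n)
  · apply AddSubgroup.sub_mem
    · apply AddSubgroup.sum_mem
      intro j hj
      have hjn : j ≠ n := (Finset.mem_erase.1 hj).1
      have hcast : ((k₂ j : ℚ)) * a j = (((k₂ j : ℤ)) : ℚ) * a j := by push_cast; ring
      rw [hcast]
      exact intMul_mem_Rcop _ (a_mem_Rcop hjn)
    · apply AddSubgroup.sum_mem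
      intro j hj
      have hjn : j ≠ n := (Finset.mem_erase.1 hj).1
      have hcast : ((k₁ j : ℚ)) * a j = (((k₁ j : ℤ)) : ℚ) * a j := by push_cast; ring
      rw [hcast]
      exact intMul_mem_Rcop _ (a_mem_Rcop hjn)


/-! ### Reduced representation, positivity, atoms -/

lemma repReduced {x : ℚ} (hx : x ∈ Mm) :
    ∃ (e : ℚ) (N : ℕ) (K : ℕ → ℕ), e ∈ ThreeDy ∧ (∀ j, N ≤ j → K j = 0) ∧ (∀ j, K j < q j) ∧
      x = e + ∑ j ∈ Finset.range N, (K j : ℚ) * a j := by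
  obtain ⟨e, N, k, he, hz, rfl⟩ := rep hx
  refine ⟨e + ∑ j ∈ Finset.range N, ((k j / q j : ℕ) : ℚ) * t j, N, fun j => k j % q j,
    ?_, ?_, ?_, ?_⟩
  · apply AddSubmonoid.add_mem _ he
    apply AddSubmonoid.sum_mem
    intro j _
    have h' : ((k j / q j : ℕ) : ℚ) * t j = (k j / q j : ℕ) • t j := (nsmul_eq_mul _ _).symm
    rw [h']
    exact ThreeDy.nsmul_mem (t_mem_threeDy j) _
  · intro j hj
    dsimp only
    rw [hz j hj]
    simp
  · intro j
    exact Nat.mod_lt _ (q_pos j)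
  · have hterm : ∀ j ∈ Finset.range N, (k j : ℚ) * a j
        = ((k j / q j : ℕ) : ℚ) * t j + ((k j % q j : ℕ) : ℚ) * a j := by
      intro j _
      have h1 : q j * (k j / q j) + k j % q j = k j := Nat.div_add_mod (k j) (q j)
      have h2 : (k j : ℚ) = ((q j : ℚ) * ((k j / q j : ℕ) : ℚ) + ((k j % q j : ℕ) : ℚ)) := by
        exact_mod_cast congrArg (Nat.cast : ℕ → ℚ) h1.symm
      rw [h2, ← q_mul_a j]
      ring
    rw [Finset.sum_congr rfl hterm, Finset.sum_add_distrib]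
    ring

lemma Mm_nonneg : ∀ x ∈ Mm, 0 ≤ x := by
  intro x hx
  induction hx using AddSubmonoid.closure_induction with
  | mem x hx =>
    rcases hx with ⟨m, rfl⟩ | ⟨n, rfl⟩
    · positivity
    · exact (a_pos n).le
  | zero => exact le_refl 0
  | add x y hx hy ihx ihy => linarith

lemma exists_gen_sub {x : ℚ} (hx : x ∈ Mm) :
    x = 0 ∨ ∃ g ∈ DyGens ∪ AGens, x - g ∈ Mm := by
  induction hx using AddSubmonoid.closure_induction with
  | mem x hx => exact Or.inr ⟨x, hx, by simpa using AddSubmonoid.zero_mem Mm⟩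
  | zero => exact Or.inl rfl
  | add x y hx hy ihx ihy =>
    rcases ihx with rfl | ⟨g, hg, hxg⟩
    · rcases ihy with rfl | ⟨g, hg, hyg⟩
      · exact Or.inl (by norm_num)
      · exact Or.inr ⟨g, hg, by simpa using hyg⟩
    · refine Or.inr ⟨g, hg, ?_⟩
      have : x + y - g = (x - g) + y := by ring
      rw [this]
      exact AddSubmonoid.add_mem _ hxg hy

lemma a_isAtom (n : ℕ) : IsAtomIn Mm (a n) := by
  refine ⟨a_mem_Mm n, (a_pos n).ne', ?_⟩
  intro x hx y hy hxy
  obtain ⟨e₁, N₁, k₁, he₁, hz₁, hx1⟩ := rep hx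
  obtain ⟨e₂, N₂, k₂, he₂, hz₂, hy1⟩ := rep hy
  obtain ⟨N, hNa, hNb, hn⟩ : ∃ N, N₁ ≤ N ∧ N₂ ≤ N ∧ n < N := ⟨N₁+N₂+n+1, by omega, by omega, by omega⟩
  have hx2 : x = e₁ + ∑ j ∈ Finset.range N, (k₁ j : ℚ) * a j := by
    rw [hx1, sum_extend hz₁ (N' := N) hNa]
  have hy2 : y = e₂ + ∑ j ∈ Finset.range N, (k₂ j : ℚ) * a j := by
    rw [hy1, sum_extend hz₂ (N' := N) hNb]
  -- combined representation of x + y, compared with the representation of `a n`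
  have haeq : (0:ℚ) + ∑ j ∈ Finset.range N, ((if j = n then (1:ℕ) else 0 : ℕ) : ℚ) * a j
      = (e₁ + e₂) + ∑ j ∈ Finset.range N, ((k₁ j + k₂ j : ℕ) : ℚ) * a j := by
    have hsum : ∑ j ∈ Finset.range N, ((if j = n then (1:ℕ) else 0 : ℕ) : ℚ) * a j = a n := by
      have : ∀ j ∈ Finset.range N,
          ((if j = n then (1:ℕ) else 0 : ℕ) : ℚ) * a j = if j = n then a n else 0 := by
        intro j _
        by_cases h : j = n
        · subst h; simp
        · simp [h]
      rw [Finset.sum_congr rfl this]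
      simp [Finset.mem_range.2 hn]
    have hsum2 : ∑ j ∈ Finset.range N, ((k₁ j + k₂ j : ℕ) : ℚ) * a j
        = ∑ j ∈ Finset.range N, (k₁ j : ℚ) * a j + ∑ j ∈ Finset.range N, (k₂ j : ℚ) * a j := by
      rw [← Finset.sum_add_distrib]
      apply Finset.sum_congr rfl
      intro j _
      push_cast
      ring
    rw [hsum, hsum2, zero_add]
    rw [hx2] at hxy
    rw [hy2] at hxy
    linarith [hxy]
  have hdvd : (q n : ℤ) ∣ 1 - ((k₁ n : ℤ) + (k₂ n : ℤ)) := by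
    have h := matching (k₁ := fun j => (if j = n then 1 else 0 : ℕ))
      (k₂ := fun j => k₁ j + k₂ j)
      (AddSubmonoid.zero_mem _) (AddSubmonoid.add_mem _ he₁ he₂) haeq hn
    simp only [if_pos rfl] at h
    convert h using 1 <;> push_cast <;> ring
  -- k₁ n + k₂ n ≡ 1 mod q n, and also k₁ n + k₂ n ≤ 1
  have hbound : (k₁ n : ℚ) * a n + (k₂ n : ℚ) * a n ≤ a n := by
    have h1 : (k₁ n : ℚ) * a n ≤ x := by
      rw [hx2]
      have : (k₁ n : ℚ) * a n ≤ ∑ j ∈ Finset.range N, (k₁ j : ℚ) * a j := by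
        apply Finset.single_le_sum (f := fun j => (k₁ j : ℚ) * a j)
        · intro j _
          have := (a_pos j).le
          positivity
        · exact Finset.mem_range.2 hn
      have := threeDy_nonneg he₁
      linarith
    have h2 : (k₂ n : ℚ) * a n ≤ y := by
      rw [hy2]
      have : (k₂ n : ℚ) * a n ≤ ∑ j ∈ Finset.range N, (k₂ j : ℚ) * a j := by
        apply Finset.single_le_sum (f := fun j => (k₂ j : ℚ) * a j)
        · intro j _
          have := (a_pos j).le
          positivity
        · exact Finset.mem_range.2 hn
      have := threeDy_nonneg he₂
      linarith
    calc (k₁ n : ℚ) * a n + (k₂ n : ℚ) * a n ≤ x + y := by linarith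
    _ = a n := hxy.symm
  have hle : k₁ n + k₂ n ≤ 1 := by
    by_contra hcon
    push_neg at hcon
    have h2 : (2:ℚ) ≤ (k₁ n : ℚ) + (k₂ n : ℚ) := by
      have h2 : (2:ℕ) ≤ k₁ n + k₂ n := hcon
      exact_mod_cast h2
    have ha := a_pos n
    nlinarith [hbound]
  have hone : k₁ n + k₂ n = 1 := by
    rcases Nat.lt_or_ge (k₁ n + k₂ n) 1 with h | h
    · exfalso
      have h0 : k₁ n = 0 ∧ k₂ n = 0 := by omega
      rw [h0.1, h0.2] at hdvd
      norm_num at hdvd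
      have h2 : (q n : ℤ) ≤ 1 := Int.le_of_dvd one_pos hdvd
      have := q_big n
      have := four_pow_ge_one n
      omega
    · omega
  -- one of x, y contains a full copy of a n, forcing the other to vanish
  rcases Nat.eq_zero_or_pos (k₁ n) with h1 | h1
  · -- k₂ n = 1, so y ≥ a n, x = 0
    have h2 : k₂ n = 1 := by omega
    left
    have hya : a n ≤ y := by
      rw [hy2]
      have : (k₂ n : ℚ) * a n ≤ ∑ j ∈ Finset.range N, (k₂ j : ℚ) * a j := by
        apply Finset.single_le_sum (f := fun j => (k₂ j : ℚ) * a j)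
        · intro j _
          have := (a_pos j).le
          positivity
        · exact Finset.mem_range.2 hn
      have h3 := threeDy_nonneg he₂
      rw [h2] at this
      push_cast at this
      linarith
    have hx0 := Mm_nonneg x hx
    linarith [hxy]
  · have h2 : k₁ n = 1 ∧ k₂ n = 0 := by omega
    right
    have hxa : a n ≤ x := by
      rw [hx2]
      have : (k₁ n : ℚ) * a n ≤ ∑ j ∈ Finset.range N, (k₁ j : ℚ) * a j := by
        apply Finset.single_le_sum (f := fun j => (k₁ j : ℚ) * a j)
        · intro j _
          have := (a_pos j).le
          positivity
        · exact Finset.mem_range.2 hn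
      have h3 := threeDy_nonneg he₁
      rw [h2.1] at this
      push_cast at this
      linarith
    have hy0 := Mm_nonneg y hy
    linarith [hxy]

lemma atom_classify {x : ℚ} (hx : IsAtomIn Mm x) : ∃ n, x = a n := by
  obtain ⟨hxM, hx0, hatom⟩ := hx
  rcases exists_gen_sub hxM with rfl | ⟨g, hg, hxg⟩
  · exact absurd rfl hx0
  · have hgM : g ∈ Mm := AddSubmonoid.subset_closure hg
    have hsplit := hatom g hgM (x - g) hxg (by ring)
    rcases hg with ⟨m, rfl⟩ | ⟨n, rfl⟩
    · -- dyadic generators are not atoms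
      exfalso
      rcases hsplit with h | h
      · have : (0:ℚ) < 3/2^m := by positivity
        exact this.ne' h
      · -- x = 3/2^m, but 3/2^m = 3/2^(m+1) + 3/2^(m+1) splits
        have hx3 : x = 3/2^m := by
          have := sub_eq_zero.mp h
          linarith [this]
        have hhalf : (3:ℚ)/2^(m+1) ∈ Mm := threeDy_le_Mm (dyGen_mem (m+1))
        have := hatom (3/2^(m+1)) hhalf (3/2^(m+1)) hhalf (by
          rw [hx3, pow_succ]
          field_simp
          ring)
        have hpos : (0:ℚ) < 3/2^(m+1) := by positivity
        rcases this with h' | h' <;> exact hpos.ne' h'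
    · rcases hsplit with h | h
      · exact absurd h (a_pos n).ne'
      · exact ⟨n, by linarith [sub_eq_zero.mp h]⟩


/-! ### Helper sums and membership -/

lemma sum_indicator {N n : ℕ} (hn : n < N) :
    ∑ j ∈ Finset.range N, ((if j = n then (1:ℕ) else 0 : ℕ) : ℚ) * a j = a n := by
  have h : ∀ j ∈ Finset.range N,
      ((if j = n then (1:ℕ) else 0 : ℕ) : ℚ) * a j = if j = n then a n else 0 := by
    intro j _
    by_cases hj : j = n
    · subst hj; simp
    · simp [hj]
  rw [Finset.sum_congr rfl h]
  simp [Finset.mem_range.2 hn]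

lemma sum_add_indicator {k : ℕ → ℕ} {N n : ℕ} (hn : n < N) :
    ∑ j ∈ Finset.range N, ((k j + (if j = n then 1 else 0) : ℕ) : ℚ) * a j
      = ∑ j ∈ Finset.range N, (k j : ℚ) * a j + a n := by
  have h : ∀ j ∈ Finset.range N, ((k j + (if j = n then 1 else 0) : ℕ) : ℚ) * a j
      = (k j : ℚ) * a j + ((if j = n then (1:ℕ) else 0 : ℕ) : ℚ) * a j := by
    intro j _
    push_cast
    ring
  rw [Finset.sum_congr rfl h, Finset.sum_add_distrib, sum_indicator hn]

lemma mem_of_rep {e : ℚ} (he : e ∈ ThreeDy) (N : ℕ) (k : ℕ → ℕ) :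
    e + ∑ j ∈ Finset.range N, (k j : ℚ) * a j ∈ Mm := by
  apply AddSubmonoid.add_mem _ (threeDy_le_Mm he)
  apply AddSubmonoid.sum_mem
  intro j _
  have : (k j : ℚ) * a j = k j • a j := (nsmul_eq_mul _ _).symm
  rw [this]
  exact Mm.nsmul_mem (a_mem_Mm j) _

lemma t_atomic (n : ℕ) : AtomicIn Mm (t n) := by
  unfold AtomicIn
  rw [← q_mul_a n]
  have h : (q n : ℚ) * a n = q n • a n := (nsmul_eq_mul _ _).symm
  rw [h]
  exact (AddSubmonoid.closure {x | IsAtomIn Mm x}).nsmul_mem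
    (AddSubmonoid.subset_closure (a_isAtom n)) _

lemma exists_small {ε : ℚ} (hε : 0 < ε) : ∃ m : ℕ, (3:ℚ)/2^m < ε := by
  obtain ⟨m, hm⟩ := pow_unbounded_of_one_lt (3/ε) (one_lt_two (α := ℚ))
  refine ⟨m, ?_⟩
  rw [div_lt_iff₀ (by positivity)]
  rw [div_lt_iff₀ hε] at hm
  nlinarith [hm]

/-! ### Almost Furstenberg -/

lemma threeDy_or_dvd {b : ℚ} (hb : b ∈ Mm) : b ∈ ThreeDy ∨ ∃ n, b - a n ∈ Mm := by
  induction hb using AddSubmonoid.closure_induction with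
  | mem x hx =>
    rcases hx with ⟨m, rfl⟩ | ⟨n, rfl⟩
    · exact Or.inl (dyGen_mem m)
    · exact Or.inr ⟨n, by simpa using AddSubmonoid.zero_mem Mm⟩
  | zero => exact Or.inl (AddSubmonoid.zero_mem _)
  | add x y hx hy ihx ihy =>
    rcases ihx with h | ⟨n, hn⟩
    · rcases ihy with h' | ⟨n, hn⟩
      · exact Or.inl (AddSubmonoid.add_mem _ h h')
      · refine Or.inr ⟨n, ?_⟩
        have : x + y - a n = x + (y - a n) := by ring
        rw [this]
        exact AddSubmonoid.add_mem _ hx hn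
    · refine Or.inr ⟨n, ?_⟩
      have : x + y - a n = (x - a n) + y := by ring
      rw [this]
      exact AddSubmonoid.add_mem _ hn hy

lemma t_succ_sub_a_not_mem (n : ℕ) : t (n+1) - a n ∉ Mm := by
  intro h
  obtain ⟨e, N', k, he, hz, heq⟩ := rep h
  obtain ⟨N, hNa, hn⟩ : ∃ N, N' ≤ N ∧ n < N := ⟨N' + n + 1, by omega, by omega⟩
  have heq2 : t (n+1) - a n = e + ∑ j ∈ Finset.range N, (k j : ℚ) * a j := by
    rw [heq, sum_extend hz (N' := N) hNa]
  -- rewrite as an equation between two representations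
  have hE : t (n+1) + ∑ j ∈ Finset.range N, ((0:ℕ) : ℚ) * a j
      = e + ∑ j ∈ Finset.range N, ((k j + (if j = n then 1 else 0) : ℕ) : ℚ) * a j := by
    rw [sum_add_indicator hn]
    simp only [Nat.cast_zero, zero_mul, Finset.sum_const_zero, add_zero]
    linarith [heq2]
  have hdvd := matching (t_mem_threeDy (n+1)) he hE hn
  have hdvd2 : (q n : ℤ) ∣ ((k n : ℤ) + 1) := by
    rw [dvd_sub_comm] at hdvd
    simpa using hdvd
  have hge : (q n : ℤ) ≤ (k n : ℤ) + 1 := Int.le_of_dvd (by positivity) hdvd2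
  have hgeQ : (q n : ℚ) ≤ (k n : ℚ) + 1 := by exact_mod_cast hge
  -- size contradiction
  have hsize : ((k n : ℚ)) * a n ≤ ∑ j ∈ Finset.range N, (k j : ℚ) * a j := by
    apply Finset.single_le_sum (f := fun j => (k j : ℚ) * a j)
    · intro j _
      have := (a_pos j).le
      positivity
    · exact Finset.mem_range.2 hn
  have he0 := threeDy_nonneg he
  have h1 : t n - a n ≤ t (n+1) - a n := by
    rw [← q_mul_a n]
    have ha := a_pos n
    nlinarith [heq2, hsize, he0, hgeQ]
  linarith [t_anti n]

lemma almost : AlmostFurstenberg Mm := by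
  intro b hb hb0
  rcases threeDy_or_dvd hb with hdy | ⟨n, hdvd⟩
  · -- b is dyadic, b = 3k/2^m with k ≥ 1
    obtain ⟨k, m, rfl⟩ := threeDy_form hdy
    have hk : k ≠ 0 := by
      rintro rfl
      simp at hb0
    have hkQ : (1:ℚ) ≤ k := by exact_mod_cast Nat.one_le_iff_ne_zero.2 hk
    -- choose n := m
    set n := m with hn
    have hexp : m ≤ 2 * (n + 1) := by omega
    -- w = b - 3/4^(n+1) ∈ ThreeDy
    have h4 : ((4:ℚ))^(n+1) = 2^(2*(n+1)) := by
      rw [show (4:ℚ) = 2^2 by norm_num, ← pow_mul]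
    have hKpos : 1 ≤ k * 2^(2*(n+1) - m) := Nat.one_le_iff_ne_zero.2 (by positivity)
    have hw : (3 * k / 2^m : ℚ) - 3/4^(n+1)
        = 3 * ((k * 2^(2*(n+1) - m) - 1 : ℕ) : ℚ) / 2^(2*(n+1)) := by
      rw [Nat.cast_sub hKpos]
      push_cast
      rw [h4]
      have h2m : (2:ℚ)^(2*(n+1)) = 2^m * 2^(2*(n+1) - m) := by
        rw [← pow_add]
        congr 1
        omega
      field_simp
      rw [h2m]
      ring
    have hwmem : (3 * k / 2^m : ℚ) - 3/4^(n+1) ∈ ThreeDy := by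
      rw [hw]; exact threeDy_of_form _ _
    refine ⟨t (n+1), t_atomic (n+1), a n, a_isAtom n, ?_, ?_⟩
    · -- divisibility: b + t (n+1) - a n ∈ Mm
      unfold DvdIn
      have hid : 3 * (k:ℚ) / 2^m + t (n+1) - a n
          = ((3 * k / 2^m : ℚ) - 3/4^(n+1)) + ((q n - 1 : ℕ) : ℚ) * a n := by
        have hqn : (1:ℕ) ≤ q n := q_pos n
        rw [Nat.cast_sub hqn]
        push_cast
        have ht : t (n+1) + 3/4^(n+1) = (q n : ℚ) * a n := by
          rw [q_mul_a n, t_eq, t_eq]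
          have : (4:ℚ)^(n+1) = 4 * 4^n := by ring
          rw [this]
          have h4n : (4:ℚ)^n ≠ 0 := by positivity
          field_simp
          ring
        linarith [ht]
      rw [hid]
      apply AddSubmonoid.add_mem _ (threeDy_le_Mm hwmem)
      have : ((q n - 1 : ℕ) : ℚ) * a n = (q n - 1) • a n := (nsmul_eq_mul _ _).symm
      rw [this]
      exact Mm.nsmul_mem (a_mem_Mm n) _
    · -- non-divisibility of t (n+1)
      unfold DvdIn
      exact t_succ_sub_a_not_mem n
  · refine ⟨0, AddSubmonoid.zero_mem _, a n, a_isAtom n, ?_, ?_⟩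
    · unfold DvdIn
      simpa using hdvd
    · unfold DvdIn
      intro h
      have := Mm_nonneg _ h
      have := a_pos n
      linarith


/-! ### Not nearly Furstenberg -/

lemma choose_b {e : ℚ} (he : e ∈ ThreeDy) :
    ∃ m : ℕ, ∀ n, ¬(e < t n ∧ t n ≤ e + 3/2^m) := by
  rcases lt_trichotomy e 2 with h | h | h
  · obtain ⟨m, hm⟩ := exists_small (show (0:ℚ) < 2 - e by linarith)
    refine ⟨m, fun n hcon => ?_⟩
    obtain ⟨h1, h2⟩ := hcon
    have := two_lt_t n
    linarith
  · exact absurd (h ▸ he) two_not_mem_threeDy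
  · obtain ⟨N₀, hN₀⟩ := pow_unbounded_of_one_lt (1/(e-2)) (show (1:ℚ) < 4 by norm_num)
    have hbig : ∀ n, N₀ ≤ n → t n < e := by
      intro n hn
      rw [t_eq]
      have h1 : (4:ℚ)^N₀ ≤ 4^n := pow_le_pow_right₀ (by norm_num) hn
      have h2 : 1/(e-2) < 4^n := lt_of_lt_of_le hN₀ h1
      have h3 : (1:ℚ)/4^n < e - 2 := by
        rw [div_lt_iff₀ (four_pow_pos n)]
        rw [div_lt_iff₀ (by linarith : (0:ℚ) < e - 2)] at h2
        linarith [h2]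
      linarith
    by_cases hSne : ((Finset.range N₀).filter (fun n => e < t n)).Nonempty
    · have hpos : 0 < ((Finset.range N₀).filter (fun n => e < t n)).inf' hSne (fun n => t n - e) := by
        rw [Finset.lt_inf'_iff]
        intro n hn
        have := (Finset.mem_filter.1 hn).2
        linarith
      obtain ⟨m, hm⟩ := exists_small hpos
      refine ⟨m, fun n hcon => ?_⟩
      obtain ⟨h1, h2⟩ := hcon
      have hnN : n < N₀ := by
        by_contra hcon2
        push_neg at hcon2
        exact absurd h1 (not_lt.2 (hbig n hcon2).le)
      have hnS : n ∈ (Finset.range N₀).filter (fun n => e < t n) :=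
        Finset.mem_filter.2 ⟨Finset.mem_range.2 hnN, h1⟩
      have := Finset.inf'_le (fun n => t n - e) hnS
      linarith
    · refine ⟨0, fun n hcon => ?_⟩
      obtain ⟨h1, h2⟩ := hcon
      have hnN : n < N₀ := by
        by_contra hcon2
        push_neg at hcon2
        exact absurd h1 (not_lt.2 (hbig n hcon2).le)
      exact hSne ⟨n, Finset.mem_filter.2 ⟨Finset.mem_range.2 hnN, h1⟩⟩

lemma key_not_nearly {c : ℚ} (hc : c ∈ Mm) : ∃ b, b ∈ Mm ∧ b ≠ 0 ∧
    ∀ n, (b + c - a n ∈ Mm) → (c - a n ∈ Mm) := by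
  obtain ⟨e, Nc, K, he, hzK, hKlt, hcrep⟩ := repReduced hc
  obtain ⟨m, hm⟩ := choose_b he
  refine ⟨3/2^m, threeDy_le_Mm (dyGen_mem m), by positivity, ?_⟩
  intro n hdvd
  by_cases hK : 1 ≤ K n
  · -- `a n` appears in the representation of `c` with positive coefficient
    have hnNc : n < Nc := by
      by_contra hcon
      push_neg at hcon
      rw [hzK n hcon] at hK
      omega
    have hsum : ∑ j ∈ Finset.range Nc, (K j : ℚ) * a j
        = ∑ j ∈ Finset.range Nc, ((K j - (if j = n then 1 else 0) : ℕ) : ℚ) * a j + a n := by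
      rw [← sum_add_indicator (k := fun j => K j - (if j = n then 1 else 0)) hnNc]
      apply Finset.sum_congr rfl
      intro j _
      congr 2
      by_cases hj : j = n
      · subst hj
        simp
        omega
      · simp [hj]
    have hcm : c - a n = e + ∑ j ∈ Finset.range Nc,
        ((K j - (if j = n then 1 else 0) : ℕ) : ℚ) * a j := by
      rw [hcrep, hsum]
      ring
    rw [hcm]
    exact mem_of_rep he _ _
  · push_neg at hK
    have hKn0 : K n = 0 := by omega
    obtain ⟨e₂, N₂, k, he₂, hz₂, heq⟩ := rep hdvd
    obtain ⟨N, hN1, hN2, hn⟩ : ∃ N, Nc ≤ N ∧ N₂ ≤ N ∧ n < N :=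
      ⟨Nc+N₂+n+1, by omega, by omega, by omega⟩
    have hcrepN : c = e + ∑ j ∈ Finset.range N, (K j : ℚ) * a j := by
      rw [hcrep, sum_extend hzK (N' := N) hN1]
    have heqN : 3/2^m + c - a n = e₂ + ∑ j ∈ Finset.range N, (k j : ℚ) * a j := by
      rw [heq, sum_extend hz₂ (N' := N) hN2]
    have hE2 : (3/2^m + e) + ∑ j ∈ Finset.range N, (K j : ℚ) * a j
        = e₂ + ∑ j ∈ Finset.range N, (k j : ℚ) * a j + a n := by
      rw [hcrepN] at heqN
      linarith [heqN]
    have hE : (3/2^m + e) + ∑ j ∈ Finset.range N, (K j : ℚ) * a j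
        = e₂ + ∑ j ∈ Finset.range N, ((k j + (if j = n then 1 else 0) : ℕ) : ℚ) * a j := by
      rw [sum_add_indicator hn]
      linarith [hE2]
    have hbe : (3:ℚ)/2^m + e ∈ ThreeDy := AddSubmonoid.add_mem _ (dyGen_mem m) he
    have hmatch : ∀ j, j < N →
        (q j : ℤ) ∣ (K j : ℤ) - ((k j + (if j = n then 1 else 0) : ℕ) : ℤ) :=
      fun j hj => matching hbe he₂ hE hj
    -- coefficient at n : q n ≤ k n + 1
    have hqn : (q n : ℚ) ≤ (k n : ℚ) + 1 := by
      have h := hmatch n hn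
      have h2 : (q n:ℤ) ∣ ((k n:ℤ) + 1) := by
        rw [dvd_sub_comm] at h
        simpa [hKn0] using h
      have h3 := Int.le_of_dvd (by positivity) h2
      exact_mod_cast h3
    -- coefficients away from n : K j ≤ k j
    have hge : ∀ j ∈ (Finset.range N).erase n, (K j : ℚ) ≤ (k j : ℚ) := by
      intro j hj
      obtain ⟨hjn, hjr⟩ := Finset.mem_erase.1 hj
      have h := hmatch j (Finset.mem_range.1 hjr)
      have h' : (q j : ℤ) ∣ (K j : ℤ) - (k j : ℤ) := by
        simpa [hjn] using h
      by_contra hcon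
      push_neg at hcon
      have hcon' : (k j : ℤ) < (K j : ℤ) := by exact_mod_cast hcon
      have hlt : (0:ℤ) < (K j:ℤ) - (k j:ℤ) := by omega
      have hle := Int.le_of_dvd hlt h'
      have hKj : (K j : ℤ) < q j := by exact_mod_cast hKlt j
      omega
    -- size analysis
    have hsplitK : ∑ j ∈ Finset.range N, (K j : ℚ) * a j
        = (K n : ℚ) * a n + ∑ j ∈ (Finset.range N).erase n, (K j : ℚ) * a j :=
      (Finset.add_sum_erase _ _ (Finset.mem_range.2 hn)).symm
    have hsplitk : ∑ j ∈ Finset.range N, (k j : ℚ) * a j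
        = (k n : ℚ) * a n + ∑ j ∈ (Finset.range N).erase n, (k j : ℚ) * a j :=
      (Finset.add_sum_erase _ _ (Finset.mem_range.2 hn)).symm
    have hSnonneg : 0 ≤ ∑ j ∈ (Finset.range N).erase n, ((k j : ℚ) - K j) * a j := by
      apply Finset.sum_nonneg
      intro j hj
      have h1 := hge j hj
      have h2 := (a_pos j).le
      nlinarith
    have hsub : ∑ j ∈ (Finset.range N).erase n, ((k j : ℚ) - K j) * a j
        = ∑ j ∈ (Finset.range N).erase n, (k j : ℚ) * a j
          - ∑ j ∈ (Finset.range N).erase n, (K j : ℚ) * a j := by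
      rw [← Finset.sum_sub_distrib]
      apply Finset.sum_congr rfl
      intro j _
      ring
    have he₂0 := threeDy_nonneg he₂
    have ha := a_pos n
    have htn : (q n : ℚ) * a n = t n := q_mul_a n
    -- E' ≥ 0
    have hE'0 : 0 ≤ e₂ + (((k n : ℚ) + 1) * a n - t n)
        + ∑ j ∈ (Finset.range N).erase n, ((k j : ℚ) - K j) * a j := by
      have : t n ≤ ((k n : ℚ) + 1) * a n := by
        rw [← htn]
        nlinarith [hqn, ha]
      linarith [hSnonneg, he₂0]
    have hkey : e - t n = (e₂ + (((k n : ℚ) + 1) * a n - t n)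
        + ∑ j ∈ (Finset.range N).erase n, ((k j : ℚ) - K j) * a j) - 3/2^m := by
      rw [hsub]
      rw [hsplitK, hsplitk] at hE2
      rw [hKn0] at hE2
      push_cast at hE2
      linarith [hE2]
    by_cases hcase : t n ≤ e
    · -- conclude divisibility of c
      have hetn : e - t n ∈ ThreeDy := threeDy_sub he (t_mem_threeDy n) hcase
      have hid : c - a n = (e - t n) + (((q n - 1 : ℕ) : ℚ) * a n
          + ∑ j ∈ Finset.range Nc, (K j : ℚ) * a j) := by
        rw [hcrep]
        have hq1 : (1:ℕ) ≤ q n := q_pos n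
        rw [Nat.cast_sub hq1]
        push_cast
        linarith [htn]
      rw [hid]
      apply AddSubmonoid.add_mem _ (threeDy_le_Mm hetn)
      apply AddSubmonoid.add_mem
      · have h' : ((q n - 1 : ℕ) : ℚ) * a n = (q n - 1) • a n := (nsmul_eq_mul _ _).symm
        rw [h']
        exact Mm.nsmul_mem (a_mem_Mm n) _
      · apply AddSubmonoid.sum_mem
        intro j _
        have h' : (K j : ℚ) * a j = K j • a j := (nsmul_eq_mul _ _).symm
        rw [h']
        exact Mm.nsmul_mem (a_mem_Mm j) _
    · exfalso
      push_neg at hcase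
      refine hm n ⟨hcase, ?_⟩
      linarith [hE'0, hkey]

lemma not_nearly : ¬ NearlyFurstenberg Mm := by
  rintro ⟨c, hcM, H⟩
  obtain ⟨b, hbM, hb0, hclaim⟩ := key_not_nearly hcM
  obtain ⟨α, hα, hd1, hd2⟩ := H b hbM hb0
  obtain ⟨n, rfl⟩ := atom_classify hα
  exact hd2 (hclaim n hd1)

end S15

/-- There exists a Puiseux monoid that is almost Furstenberg but not nearly
Furstenberg. -/
theorem stmt_15 :
    ∃ M : AddSubmonoid ℚ, (∀ x ∈ M, 0 ≤ x) ∧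
      AlmostFurstenberg M ∧ ¬ NearlyFurstenberg M :=
  ⟨S15.Mm, S15.Mm_nonneg, S15.almost, S15.not_nearly⟩
end

section
/- Let M be the Puiseux monoid M = ⟨1/p : p prime, p ≥ 3⟩ ∪ ℚ_{≥1}. Then the set of atoms of M is exactly {1/p : p prime, p ≥ 3}, and M is a Furstenberg monoid. -/
def IsAtomOfSet (S : Set ℚ) (a : ℚ) : Prop :=
  a ∈ S ∧ a ≠ 0 ∧ ∀ x ∈ S, ∀ y ∈ S, a = x + y → x = 0 ∨ y = 0

def S16 : Set ℚ :=
  (AddSubmonoid.closure {q : ℚ | ∃ p : ℕ, p.Prime ∧ 3 ≤ p ∧ q = 1/(p : ℚ)} : Set ℚ)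
    ∪ {x : ℚ | 1 ≤ x}

namespace S16aux

abbrev G : Set ℚ := {q : ℚ | ∃ p : ℕ, p.Prime ∧ 3 ≤ p ∧ q = 1/(p : ℚ)}
abbrev C : AddSubmonoid ℚ := AddSubmonoid.closure G

lemma nonneg_of_mem {x : ℚ} (hx : x ∈ C) : 0 ≤ x := by
  induction hx using AddSubmonoid.closure_induction with
  | mem z hz => obtain ⟨p, hp, _, rfl⟩ := hz; positivity
  | zero => exact le_refl 0
  | add x y hx hy ihx ihy => exact add_nonneg ihx ihy

lemma nonneg_of_memS {x : ℚ} (hx : x ∈ S16) : 0 ≤ x := by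
  rcases hx with h | h
  · exact nonneg_of_mem h
  · exact le_trans zero_le_one h

/-- decomposition of closure elements relative to a prime p -/
lemma decomp {p : ℕ} (hp : p.Prime) {x : ℚ} (hx : x ∈ C) :
    ∃ (n : ℕ) (u : ℚ), x = n / p + u ∧ 0 ≤ u ∧ ¬ (p ∣ u.den) := by
  induction hx using AddSubmonoid.closure_induction with
  | mem z hz =>
    obtain ⟨q, hq, hq3, rfl⟩ := hz
    by_cases hqp : q = p
    · subst hqp
      exact ⟨1, 0, by push_cast; ring, le_refl 0, by simpa using hp.one_lt.ne'⟩
    · refine ⟨0, 1/(q:ℚ), by push_cast; ring, by positivity, ?_⟩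
      have hden : ((1 : ℚ)/(q:ℚ)).den = q := by
        rw [one_div, Rat.inv_natCast_den_of_pos hq.pos]
      rw [hden]
      intro h
      exact hqp ((Nat.prime_dvd_prime_iff_eq hp hq).mp h).symm
  | zero => exact ⟨0, 0, by simp, le_refl 0, by simpa using hp.one_lt.ne'⟩
  | add x y hx hy ihx ihy =>
    obtain ⟨n, u, rfl, hu0, hud⟩ := ihx
    obtain ⟨m, v, rfl, hv0, hvd⟩ := ihy
    refine ⟨n + m, u + v, by push_cast; ring, add_nonneg hu0 hv0, fun h => ?_⟩
    rcases (hp.dvd_mul.mp (h.trans (Rat.add_den_dvd u v))) with h' | h'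
    exacts [hud h', hvd h']

end S16aux

namespace S16aux

lemma one_div_lt_one {p : ℕ} (hp : p.Prime) (hp3 : 3 ≤ p) : (1 : ℚ)/(p:ℚ) < 1 := by
  rw [div_lt_one (by exact_mod_cast hp.pos)]
  exact_mod_cast hp.one_lt

lemma mem_C {p : ℕ} (hp : p.Prime) (hp3 : 3 ≤ p) : (1 : ℚ)/(p:ℚ) ∈ C :=
  AddSubmonoid.subset_closure ⟨p, hp, hp3, rfl⟩

lemma atom_one_div {p : ℕ} (hp : p.Prime) (hp3 : 3 ≤ p) :
    IsAtomOfSet S16 (1/(p:ℚ)) := by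
  have hp0 : (0 : ℚ) < p := by exact_mod_cast hp.pos
  refine ⟨Or.inl (mem_C hp hp3), by positivity, ?_⟩
  intro x hx y hy hxy
  -- x and y are < 1, hence in the closure part
  have hx0 : 0 ≤ x := nonneg_of_memS hx
  have hy0 : 0 ≤ y := nonneg_of_memS hy
  have hxC : x ∈ C := by
    rcases hx with h | h
    · exact h
    · exfalso
      have : (1:ℚ)/p < 1 := one_div_lt_one hp hp3
      linarith [Set.mem_setOf_eq ▸ h]
  have hyC : y ∈ C := by
    rcases hy with h | h
    · exact h
    · exfalso
      have : (1:ℚ)/p < 1 := one_div_lt_one hp hp3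
      linarith [Set.mem_setOf_eq ▸ h]
  obtain ⟨n, u, rfl, hu0, hud⟩ := decomp hp hxC
  obtain ⟨m, v, rfl, hv0, hvd⟩ := decomp hp hyC
  set w : ℚ := u + v with hw
  have hw0 : 0 ≤ w := add_nonneg hu0 hv0
  have hwd : ¬ (p ∣ w.den) := fun h => by
    rcases hp.dvd_mul.mp (h.trans (Rat.add_den_dvd u v)) with h' | h'
    exacts [hud h', hvd h']
  have hweq : w = ((1 - (n:ℤ) - (m:ℤ) : ℤ) : ℚ) / ((p:ℤ) : ℚ) := by
    have h2 : ((1 - (n:ℤ) - (m:ℤ) : ℤ) : ℚ) / ((p:ℤ) : ℚ)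
        = 1/(p:ℚ) - (n:ℚ)/p - (m:ℚ)/p := by push_cast; ring
    rw [h2, hw]; linarith [hxy]
  have hdvd : (w.den : ℤ) ∣ (p : ℤ) := by
    rw [hweq, ← Rat.divInt_eq_div]
    exact Rat.den_dvd _ _
  have hden1 : w.den = 1 := by
    rcases (Nat.dvd_prime hp).mp (by exact_mod_cast hdvd) with h | h
    · exact h
    · exact absurd (h ▸ dvd_refl p) hwd
  obtain ⟨z, hz⟩ : ∃ z : ℤ, (z : ℚ) = w := ⟨w.num, by
    rw [← Rat.den_eq_one_iff] at *; exact hden1⟩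
  have hwlt : w < 1 := by
    have hnp : (0:ℚ) ≤ (n:ℚ)/p := by positivity
    have hmp : (0:ℚ) ≤ (m:ℚ)/p := by positivity
    have h1p : (1:ℚ)/p < 1 := one_div_lt_one hp hp3
    rw [hw]; linarith [hxy]
  have hz0 : z = 0 := by
    have h1 : (0:ℤ) ≤ z := by exact_mod_cast hz ▸ hw0
    have h2 : z < 1 := by exact_mod_cast hz ▸ hwlt
    omega
  have hw00 : w = 0 := by rw [← hz, hz0]; norm_num
  have hu : u = 0 := le_antisymm (by rw [hw] at hw00; linarith) hu0
  have hv : v = 0 := le_antisymm (by rw [hw] at hw00; linarith) hv0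
  subst hu hv
  have hnm : n + m = 1 := by
    have h : (n:ℚ) + m = 1 := by
      field_simp at hxy
      linarith
    exact_mod_cast h
  have : n = 0 ∨ m = 0 := by omega
  rcases this with h | h
  · left; simp [h]
  · right; simp [h]

end S16aux

namespace S16aux

lemma exists_sub_mem {x : ℚ} (hx : x ∈ C) :
    x = 0 ∨ ∃ p : ℕ, p.Prime ∧ 3 ≤ p ∧ x - 1/(p:ℚ) ∈ C := by
  induction hx using AddSubmonoid.closure_induction with
  | mem z hz =>
    obtain ⟨p, hp, hp3, rfl⟩ := hz
    exact Or.inr ⟨p, hp, hp3, by simpa using zero_mem C⟩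
  | zero => exact Or.inl rfl
  | add x y hx hy ihx ihy =>
    rcases ihx with rfl | ⟨p, hp, hp3, hmem⟩
    · rcases ihy with rfl | ⟨p, hp, hp3, hmem⟩
      · exact Or.inl (by simp)
      · exact Or.inr ⟨p, hp, hp3, by simpa using hmem⟩
    · exact Or.inr ⟨p, hp, hp3, by
        have := add_mem hmem hy
        convert this using 1; ring⟩

lemma furst {b : ℚ} (hb : b ∈ S16) (hb0 : b ≠ 0) :
    ∃ p : ℕ, p.Prime ∧ 3 ≤ p ∧ b - 1/(p:ℚ) ∈ S16 := by
  rcases hb with h | h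
  · rcases exists_sub_mem h with rfl | ⟨p, hp, hp3, hm⟩
    · exact absurd rfl hb0
    · exact ⟨p, hp, hp3, Or.inl hm⟩
  · have hb1 : (1:ℚ) ≤ b := h
    rcases eq_or_lt_of_le hb1 with rfl | hlt
    · refine ⟨3, by norm_num, le_refl 3, Or.inl ?_⟩
      have h3 : (1:ℚ)/(3:ℕ) ∈ C := mem_C (by norm_num) (le_refl 3)
      have : (1:ℚ) - 1/((3:ℕ):ℚ) = 1/((3:ℕ):ℚ) + 1/((3:ℕ):ℚ) := by norm_num
      rw [this]
      exact add_mem h3 h3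
    · -- pick a large prime
      obtain ⟨p, hple, hp⟩ := Nat.exists_infinite_primes (max 3 (⌈(1/(b-1) : ℚ)⌉₊ + 1))
      have hp3 : 3 ≤ p := le_trans (le_max_left _ _) hple
      have hppos : (0:ℚ) < p := by exact_mod_cast hp.pos
      refine ⟨p, hp, hp3, Or.inr ?_⟩
      have hceil : (1/(b-1) : ℚ) ≤ (p : ℚ) := by
        calc (1/(b-1) : ℚ) ≤ (⌈(1/(b-1) : ℚ)⌉₊ : ℚ) := Nat.le_ceil _
        _ ≤ (p : ℚ) := by
            exact_mod_cast Nat.le_of_lt (lt_of_lt_of_le (Nat.lt_succ_self _)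
              (le_trans (le_max_right _ _) hple))
      have hb1' : (0:ℚ) < b - 1 := by linarith
      have : 1/(p:ℚ) ≤ b - 1 := by
        rw [div_le_iff₀ hppos]
        have := (div_le_iff₀ hb1').mp hceil
        linarith
      show (1:ℚ) ≤ b - 1/p
      linarith

end S16aux

/-- The atoms of `S16` are exactly the reciprocals of odd primes, and `S16` is
Furstenberg. -/
theorem stmt_16 :
    {a | IsAtomOfSet S16 a} = {q : ℚ | ∃ p : ℕ, p.Prime ∧ 3 ≤ p ∧ q = 1/(p : ℚ)} ∧
    ∀ b ∈ S16, b ≠ 0 → ∃ a, IsAtomOfSet S16 a ∧ b - a ∈ S16 := by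
  constructor
  · ext a
    simp only [Set.mem_setOf_eq]
    constructor
    · rintro ⟨haS, ha0, hatom⟩
      obtain ⟨p, hp, hp3, hm⟩ := S16aux.furst haS ha0
      have h1p : (1:ℚ)/p ∈ S16 := Or.inl (S16aux.mem_C hp hp3)
      have := hatom (1/(p:ℚ)) h1p (a - 1/(p:ℚ)) hm (by ring)
      rcases this with h | h
      · exfalso
        have hppos : (0:ℚ) < p := by exact_mod_cast hp.pos
        have : (0:ℚ) < 1/p := by positivity
        rw [h] at this; exact lt_irrefl 0 this
      · exact ⟨p, hp, hp3, by linarith [sub_eq_zero.mp h]⟩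
    · rintro ⟨p, hp, hp3, rfl⟩
      exact S16aux.atom_one_div hp hp3
  · intro b hb hb0
    obtain ⟨p, hp, hp3, hm⟩ := S16aux.furst hb hb0
    exact ⟨1/(p:ℚ), S16aux.atom_one_div hp hp3, hm⟩
end
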